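/- arXiv:2408.10896 — 8 statements merged into one kernel-verified Lean document; each statement's English description precedes it below -/
import Mathlib

section
/- For probability measures P and P' on a finite poset S, P is stochastically smaller than P' (i.e., P(U) ≤ P'(U) for every up-set U of S) if and only if there exists a probability measure on S × S with marginals P and P' supported on the set of pairs (x, x') with x ≤ x'. -/
open Finset
open scoped Classical

section Strassen

variable {S : Type*} [Fintype S] [PartialOrder S]

/-- up-set predicate -/
def IsUpSet (U : Finset S) : Prop := ∀ x ∈ U, ∀ y, x ≤ y → y ∈ U

lemma IsUpSet.union {U V : Finset S} (hU : IsUpSet U) (hV : IsUpSet V) :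
    IsUpSet (U ∪ V) := by
  classical
  intro a ha y hy
  rcases Finset.mem_union.1 ha with h | h
  · exact Finset.mem_union.2 (Or.inl (hU a h y hy))
  · exact Finset.mem_union.2 (Or.inr (hV a h y hy))

lemma IsUpSet.inter {U V : Finset S} (hU : IsUpSet U) (hV : IsUpSet V) :
    IsUpSet (U ∩ V) := by
  classical
  intro a ha y hy
  rw [Finset.mem_inter] at ha ⊢
  exact ⟨hU a ha.1 y hy, hV a ha.2 y hy⟩

/-- Key combinatorial step: if domination holds and `P x > P' x`, there is `y > x`
with `P y < P' y` such that every up-set containing `y` but not `x` has strict slack. -/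
lemma strassen_step (P P' : S → ℝ)
    (hdom : ∀ U : Finset S, IsUpSet U → ∑ z ∈ U, P z ≤ ∑ z ∈ U, P' z)
    (x : S) (hx : P' x < P x) :
    ∃ y, x < y ∧ P y < P' y ∧
      ∀ U : Finset S, IsUpSet U → y ∈ U → x ∉ U → ∑ z ∈ U, P z < ∑ z ∈ U, P' z := by
  classical
  set A : Finset (Finset S) :=
    univ.powerset.filter
      (fun U : Finset S => IsUpSet U ∧ x ∉ U ∧ ∑ z ∈ U, P' z ≤ ∑ z ∈ U, P z) with hA
  set F : Finset S := A.sup id with hFdef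
  have hFp : IsUpSet F ∧ x ∉ F ∧ ∑ z ∈ F, P' z ≤ ∑ z ∈ F, P z := by
    refine Finset.sup_induction (p := fun W : Finset S =>
        IsUpSet W ∧ x ∉ W ∧ ∑ z ∈ W, P' z ≤ ∑ z ∈ W, P z) ?_ ?_ ?_
    · exact ⟨fun a ha => absurd ha (Finset.notMem_empty a), Finset.notMem_empty x, by simp⟩
    · rintro U ⟨hU1, hU2, hU3⟩ V ⟨hV1, hV2, hV3⟩
      simp only [Finset.sup_eq_union]
      refine ⟨hU1.union hV1, ?_, ?_⟩
      · simp [Finset.mem_union, hU2, hV2]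
      · have hUe : ∑ z ∈ U, P z = ∑ z ∈ U, P' z := le_antisymm (hdom U hU1) hU3
        have hVe : ∑ z ∈ V, P z = ∑ z ∈ V, P' z := le_antisymm (hdom V hV1) hV3
        have hI : ∑ z ∈ U ∩ V, P z ≤ ∑ z ∈ U ∩ V, P' z := hdom _ (hU1.inter hV1)
        have h1 : ∑ z ∈ U ∪ V, P z + ∑ z ∈ U ∩ V, P z = ∑ z ∈ U, P z + ∑ z ∈ V, P z :=
          Finset.sum_union_inter
        have h2 : ∑ z ∈ U ∪ V, P' z + ∑ z ∈ U ∩ V, P' z = ∑ z ∈ U, P' z + ∑ z ∈ V, P' z :=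
          Finset.sum_union_inter
        linarith
    · intro U hU
      have := (Finset.mem_filter.1 hU).2
      simpa using this
  obtain ⟨hF1, hF2, hF3⟩ := hFp
  set T : Finset S := univ.filter (fun z => x ≤ z) with hTdef
  have hT1 : IsUpSet T := by
    intro a ha y hy
    simp only [hTdef, Finset.mem_filter, Finset.mem_univ, true_and] at ha ⊢
    exact le_trans ha hy
  set G : Finset S := F ∪ T with hGdef
  have hG1 : IsUpSet G := hF1.union hT1
  have hGdom : ∑ z ∈ G, P z ≤ ∑ z ∈ G, P' z := hdom G hG1
  set D : Finset S := G \ F with hDdef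
  have hsplit : ∀ f : S → ℝ, ∑ z ∈ G, f z = ∑ z ∈ F, f z + ∑ z ∈ D, f z := by
    intro f
    rw [hDdef, Finset.sum_sdiff_eq_sub Finset.subset_union_left, add_sub_cancel]
  have hD : ∑ z ∈ D, P z ≤ ∑ z ∈ D, P' z := by
    have := hGdom
    rw [hsplit P, hsplit P'] at this
    linarith
  have hxD : x ∈ D := by
    simp only [hDdef, Finset.mem_sdiff, hGdef, Finset.mem_union, hTdef,
      Finset.mem_filter, Finset.mem_univ, true_and]
    exact ⟨Or.inr le_rfl, hF2⟩
  have hEx : ∃ y ∈ D.erase x, P y < P' y := by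
    by_contra hcon
    push_neg at hcon
    have hle : ∑ z ∈ D.erase x, P' z ≤ ∑ z ∈ D.erase x, P z := Finset.sum_le_sum hcon
    have e1 := Finset.sum_erase_add D P hxD
    have e2 := Finset.sum_erase_add D P' hxD
    linarith
  obtain ⟨y, hyD, hy⟩ := hEx
  have hyne : y ≠ x := (Finset.mem_erase.1 hyD).1
  have hyD' : y ∈ D := (Finset.mem_erase.1 hyD).2
  have hyF : y ∉ F := (Finset.mem_sdiff.1 hyD').2
  have hxy : x < y := by
    have hyG : y ∈ G := (Finset.mem_sdiff.1 hyD').1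
    rw [hGdef, Finset.mem_union] at hyG
    rcases hyG with h | h
    · exact absurd h hyF
    · have : x ≤ y := by simpa [hTdef] using h
      exact lt_of_le_of_ne this (Ne.symm hyne)
  refine ⟨y, hxy, hy, ?_⟩
  intro U hU1 hyU hxU
  by_contra hcon
  push_neg at hcon
  have hUA : U ∈ A := by
    rw [hA, Finset.mem_filter]
    exact ⟨Finset.mem_powerset.2 (Finset.subset_univ U), hU1, hxU, hcon⟩
  have hUF : U ⊆ F := by
    have := Finset.le_sup (f := id) hUA
    simpa [hFdef] using this
  exact hyF (hUF hyU)

/-- Composition of monotone couplings. -/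
lemma strassen_compose (P Q R : S → ℝ) (q1 q2 : S × S → ℝ)
    (h1 : ∀ p, 0 ≤ q1 p) (h1r : ∀ a, ∑ b, q1 (a, b) = P a)
    (h1c : ∀ b, ∑ a, q1 (a, b) = Q b) (h1s : ∀ p, q1 p ≠ 0 → p.1 ≤ p.2)
    (h2 : ∀ p, 0 ≤ q2 p) (h2r : ∀ b, ∑ c, q2 (b, c) = Q b)
    (h2c : ∀ c, ∑ b, q2 (b, c) = R c) (h2s : ∀ p, q2 p ≠ 0 → p.1 ≤ p.2) :
    ∃ q : S × S → ℝ, (∀ p, 0 ≤ q p) ∧ (∀ a, ∑ c, q (a, c) = P a) ∧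
      (∀ c, ∑ a, q (a, c) = R c) ∧ ∀ p, q p ≠ 0 → p.1 ≤ p.2 := by
  classical
  have hQ0 : ∀ b, 0 ≤ Q b := fun b => (h1c b) ▸ Finset.sum_nonneg (fun a _ => h1 _)
  have h1z : ∀ a b, Q b = 0 → q1 (a, b) = 0 := by
    intro a b hb
    have h0 : ∑ a, q1 (a, b) = 0 := (h1c b).trans hb
    exact (Finset.sum_eq_zero_iff_of_nonneg (fun a _ => h1 _)).1 h0 a (Finset.mem_univ a)
  have h2z : ∀ b c, Q b = 0 → q2 (b, c) = 0 := by
    intro b c hb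
    have h0 : ∑ c, q2 (b, c) = 0 := (h2r b).trans hb
    exact (Finset.sum_eq_zero_iff_of_nonneg (fun c _ => h2 _)).1 h0 c (Finset.mem_univ c)
  refine ⟨fun p => ∑ b, q1 (p.1, b) * q2 (b, p.2) / Q b, ?_, ?_, ?_, ?_⟩
  · intro p
    exact Finset.sum_nonneg fun b _ => div_nonneg (mul_nonneg (h1 _) (h2 _)) (hQ0 b)
  · intro a
    rw [Finset.sum_comm, ← h1r a]
    refine Finset.sum_congr rfl fun b _ => ?_
    dsimp only
    by_cases hb : Q b = 0
    · simp [h2z _ _ hb, h1z a b hb]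
    · calc ∑ c, q1 (a, b) * q2 (b, c) / Q b
          = (q1 (a, b) * ∑ c, q2 (b, c)) / Q b := by
            rw [Finset.mul_sum, Finset.sum_div]
        _ = q1 (a, b) := by rw [h2r b, mul_div_assoc, div_self hb, mul_one]
  · intro c
    rw [Finset.sum_comm, ← h2c c]
    refine Finset.sum_congr rfl fun b _ => ?_
    dsimp only
    by_cases hb : Q b = 0
    · simp [h2z b c hb, h1z _ b hb]
    · calc ∑ a, q1 (a, b) * q2 (b, c) / Q b
          = (∑ a, q1 (a, b)) * q2 (b, c) / Q b := by
            rw [Finset.sum_mul, Finset.sum_div]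
        _ = q2 (b, c) := by rw [h1c b, mul_comm, mul_div_assoc, div_self hb, mul_one]
  · rintro ⟨a, c⟩ hq
    obtain ⟨b, _, hb⟩ := Finset.exists_ne_zero_of_sum_ne_zero hq
    have hq1 : q1 (a, b) ≠ 0 := by intro h; apply hb; simp [h]
    have hq2 : q2 (b, c) ≠ 0 := by intro h; apply hb; simp [h]
    exact le_trans (h1s (a, b) hq1) (h2s (b, c) hq2)

/-- Diagonal coupling when `P ≤ P'` pointwise and totals agree (forcing `P = P'`). -/
lemma strassen_diag (P P' : S → ℝ) (hP : ∀ z, 0 ≤ P z) (h : ∀ z, P z ≤ P' z)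
    (hsum : ∑ z, P z = ∑ z, P' z) :
    ∃ q : S × S → ℝ, (∀ p, 0 ≤ q p) ∧ (∀ a, ∑ b, q (a, b) = P a) ∧
      (∀ b, ∑ a, q (a, b) = P' b) ∧ ∀ p, q p ≠ 0 → p.1 ≤ p.2 := by
  classical
  have hPP : ∀ z, P z = P' z := by
    by_contra hc
    push_neg at hc
    obtain ⟨z0, hz0⟩ := hc
    have : ∑ z, P z < ∑ z, P' z :=
      Finset.sum_lt_sum (fun i _ => h i) ⟨z0, Finset.mem_univ z0, lt_of_le_of_ne (h z0) hz0⟩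
    linarith
  refine ⟨fun p => if p.1 = p.2 then P p.1 else 0, ?_, ?_, ?_, ?_⟩
  · intro p
    dsimp only
    split
    · exact hP p.1
    · exact le_refl 0
  · intro a
    simpa using Finset.sum_ite_eq (univ : Finset S) a (fun _ => P a)
  · intro b
    have := Finset.sum_ite_eq' (univ : Finset S) b (fun a => P a)
    simpa [hPP b] using this
  · rintro ⟨a, b⟩ hq
    dsimp only at hq
    by_cases hab : a = b
    · exact le_of_eq hab
    · simp [hab] at hq

open scoped Classical in
/-- Termination measure. -/
noncomputable def strassenMeas (P P' : S → ℝ) : ℕ :=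
  (univ.powerset.filter
      (fun U : Finset S => IsUpSet U ∧ ∑ z ∈ U, P z < ∑ z ∈ U, P' z)).card
    + (univ.filter (fun z => P' z < P z)).card
    + (univ.filter (fun z => P z < P' z)).card

lemma strassen_main : ∀ (n : ℕ) (P P' : S → ℝ), (∀ z, 0 ≤ P z) → (∀ z, 0 ≤ P' z) →
    (∑ z, P z = ∑ z, P' z) →
    (∀ U : Finset S, IsUpSet U → ∑ z ∈ U, P z ≤ ∑ z ∈ U, P' z) →
    strassenMeas P P' ≤ n →
    ∃ q : S × S → ℝ, (∀ p, 0 ≤ q p) ∧ (∀ a, ∑ b, q (a, b) = P a) ∧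
      (∀ b, ∑ a, q (a, b) = P' b) ∧ ∀ p, q p ≠ 0 → p.1 ≤ p.2 := by
  classical
  intro n
  induction n with
  | zero =>
    intro P P' hP hP' hsum hdom hm
    refine strassen_diag P P' hP (fun z => ?_) hsum
    by_contra hz
    push_neg at hz
    have hzmem : z ∈ univ.filter (fun z => P' z < P z) := by
      simp [Finset.mem_filter, hz]
    have : 0 < (univ.filter (fun z => P' z < P z)).card :=
      Finset.card_pos.2 ⟨z, hzmem⟩
    have hm' : (univ.filter (fun z => P' z < P z)).card ≤ strassenMeas P P' := by
      unfold strassenMeas; omega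
    omega
  | succ n ih =>
    intro P P' hP hP' hsum hdom hm
    by_cases hex : ∃ x, P' x < P x
    · obtain ⟨x, hx⟩ := hex
      obtain ⟨y, hxy, hy, hslack⟩ := strassen_step P P' hdom x hx
      have hyne : y ≠ x := ne_of_gt hxy
      have hxyne : x ≠ y := ne_of_lt hxy
      set 𝒰 : Finset (Finset S) :=
        univ.powerset.filter (fun U : Finset S => IsUpSet U ∧ y ∈ U ∧ x ∉ U) with h𝒰
      have hTy : univ.filter (fun z => y ≤ z) ∈ 𝒰 := by
        rw [h𝒰, Finset.mem_filter]
        refine ⟨Finset.mem_powerset.2 (Finset.subset_univ _), ?_, ?_, ?_⟩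
        · intro a ha w hw
          simp only [Finset.mem_filter, Finset.mem_univ, true_and] at ha ⊢
          exact le_trans ha hw
        · simp
        · simp only [Finset.mem_filter, Finset.mem_univ, true_and]
          exact fun h => absurd (lt_of_lt_of_le hxy h) (lt_irrefl x)
      have hne : (𝒰.image (fun U => ∑ z ∈ U, P' z - ∑ z ∈ U, P z)).Nonempty :=
        ⟨_, Finset.mem_image_of_mem _ hTy⟩
      set s : ℝ := (𝒰.image (fun U => ∑ z ∈ U, P' z - ∑ z ∈ U, P z)).min' hne with hs
      have hs_le : ∀ U ∈ 𝒰, s ≤ ∑ z ∈ U, P' z - ∑ z ∈ U, P z := by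
        intro U hU
        exact Finset.min'_le _ _ (Finset.mem_image_of_mem _ hU)
      obtain ⟨U0, hU0, hU0s⟩ : ∃ U0 ∈ 𝒰, ∑ z ∈ U0, P' z - ∑ z ∈ U0, P z = s := by
        have := Finset.min'_mem _ hne
        rw [← hs] at this
        exact Finset.mem_image.1 this
      have hU0' := Finset.mem_filter.1 hU0
      have hs_pos : 0 < s := by
        rw [← hU0s]
        have := hslack U0 hU0'.2.1 hU0'.2.2.1 hU0'.2.2.2
        linarith
      set ε : ℝ := min (P x - P' x) (min (P' y - P y) s) with hε
      have hε1 : ε ≤ P x - P' x := min_le_left _ _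
      have hε2 : ε ≤ P' y - P y := le_trans (min_le_right _ _) (min_le_left _ _)
      have hε3 : ε ≤ s := le_trans (min_le_right _ _) (min_le_right _ _)
      have hε_pos : 0 < ε :=
        lt_min (by linarith) (lt_min (by linarith) hs_pos)
      set P'' : S → ℝ :=
        fun z => P' z + (if z = x then ε else 0) - (if z = y then ε else 0) with hP''def
      have hP''x : P'' x = P' x + ε := by simp [hP''def, hxyne]
      have hP''y : P'' y = P' y - ε := by simp [hP''def, hyne]
      have hP''z : ∀ z, z ≠ x → z ≠ y → P'' z = P' z := by
        intro z h1 h2; simp [hP''def, h1, h2]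
      have hsumU : ∀ U : Finset S, ∑ z ∈ U, P'' z =
          ∑ z ∈ U, P' z + (if x ∈ U then ε else 0) - (if y ∈ U then ε else 0) := by
        intro U
        rw [hP''def]
        rw [Finset.sum_sub_distrib, Finset.sum_add_distrib,
          Finset.sum_ite_eq' U x (fun _ => ε), Finset.sum_ite_eq' U y (fun _ => ε)]
      have hP''nn : ∀ z, 0 ≤ P'' z := by
        intro z
        by_cases h1 : z = x
        · subst h1; rw [hP''x]; have := hP' z; linarith
        · by_cases h2 : z = y
          · subst h2; rw [hP''y]; have := hP z; linarith
          · rw [hP''z z h1 h2]; exact hP' z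
      have hsum'' : ∑ z, P z = ∑ z, P'' z := by
        rw [hsumU univ]
        simp only [Finset.mem_univ, if_true]
        linarith
      have hdom'' : ∀ U : Finset S, IsUpSet U → ∑ z ∈ U, P z ≤ ∑ z ∈ U, P'' z := by
        intro U hU
        rw [hsumU U]
        by_cases hyU : y ∈ U
        · by_cases hxU : x ∈ U
          · simp only [hxU, hyU, if_true]
            have := hdom U hU
            linarith
          · have hU𝒰 : U ∈ 𝒰 := by
              rw [h𝒰, Finset.mem_filter]
              exact ⟨Finset.mem_powerset.2 (Finset.subset_univ U), hU, hyU, hxU⟩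
            have := hs_le U hU𝒰
            simp only [hxU, hyU, if_true, if_false]
            linarith
        · have hxU : x ∉ U := fun hxU => hyU (hU x hxU y (le_of_lt hxy))
          simp only [hxU, hyU, if_false]
          have := hdom U hU
          linarith
      -- measure strictly decreases
      have hsub1 : (univ.powerset.filter
            (fun U : Finset S => IsUpSet U ∧ ∑ z ∈ U, P z < ∑ z ∈ U, P'' z)) ⊆
          (univ.powerset.filter
            (fun U : Finset S => IsUpSet U ∧ ∑ z ∈ U, P z < ∑ z ∈ U, P' z)) := by
        intro U hU
        rw [Finset.mem_filter] at hU ⊢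
        obtain ⟨hU1, hU2, hU3⟩ := hU
        refine ⟨hU1, hU2, ?_⟩
        rw [hsumU U] at hU3
        by_cases hxU : x ∈ U
        · have hyU : y ∈ U := hU2 x hxU y (le_of_lt hxy)
          simp only [hxU, hyU, if_true] at hU3
          linarith
        · by_cases hyU : y ∈ U
          · simp only [hxU, hyU, if_true, if_false] at hU3
            linarith
          · simp only [hxU, hyU, if_false] at hU3
            linarith
      have hsub2 : (univ.filter (fun z => P'' z < P z)) ⊆
          (univ.filter (fun z => P' z < P z)) := by
        intro z hz
        rw [Finset.mem_filter] at hz ⊢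
        refine ⟨Finset.mem_univ z, ?_⟩
        by_cases h1 : z = x
        · subst h1; rw [hP''x] at hz; linarith [hz.2]
        · by_cases h2 : z = y
          · subst h2; rw [hP''y] at hz; linarith [hz.2]
          · rw [hP''z z h1 h2] at hz; exact hz.2
      have hsub3 : (univ.filter (fun z => P z < P'' z)) ⊆
          (univ.filter (fun z => P z < P' z)) := by
        intro z hz
        rw [Finset.mem_filter] at hz ⊢
        refine ⟨Finset.mem_univ z, ?_⟩
        by_cases h1 : z = x
        · subst h1; rw [hP''x] at hz; linarith [hz.2]
        · by_cases h2 : z = y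
          · subst h2; rw [hP''y] at hz; linarith [hz.2]
          · rw [hP''z z h1 h2] at hz; exact hz.2
      have hc1 : (univ.powerset.filter
            (fun U : Finset S => IsUpSet U ∧ ∑ z ∈ U, P z < ∑ z ∈ U, P'' z)).card ≤
          (univ.powerset.filter
            (fun U : Finset S => IsUpSet U ∧ ∑ z ∈ U, P z < ∑ z ∈ U, P' z)).card :=
        Finset.card_le_card hsub1
      have hc2 : (univ.filter (fun z => P'' z < P z)).card ≤
          (univ.filter (fun z => P' z < P z)).card := Finset.card_le_card hsub2
      have hc3 : (univ.filter (fun z => P z < P'' z)).card ≤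
          (univ.filter (fun z => P z < P' z)).card := Finset.card_le_card hsub3
      have hstrict : strassenMeas P P'' < strassenMeas P P' := by
        have hcase : ε = P x - P' x ∨ ε = P' y - P y ∨ ε = s := by
          rcases min_cases (P x - P' x) (min (P' y - P y) s) with ⟨h, _⟩ | ⟨h, _⟩
          · left; rw [hε, h]
          · rcases min_cases (P' y - P y) s with ⟨h2, _⟩ | ⟨h2, _⟩
            · right; left; rw [hε, h, h2]
            · right; right; rw [hε, h, h2]
        unfold strassenMeas
        rcases hcase with hc | hc | hc
        · have hxin : x ∈ univ.filter (fun z => P' z < P z) := by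
            simp [Finset.mem_filter, hx]
          have hxout : x ∉ univ.filter (fun z => P'' z < P z) := by
            simp only [Finset.mem_filter, Finset.mem_univ, true_and, not_lt]
            rw [hP''x, hc]; linarith
          have := Finset.card_lt_card
            ((Finset.ssubset_iff_of_subset hsub2).2 ⟨x, hxin, hxout⟩)
          omega
        · have hyin : y ∈ univ.filter (fun z => P z < P' z) := by
            simp [Finset.mem_filter, hy]
          have hyout : y ∉ univ.filter (fun z => P z < P'' z) := by
            simp only [Finset.mem_filter, Finset.mem_univ, true_and, not_lt]
            rw [hP''y, hc]; linarith
          have := Finset.card_lt_card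
            ((Finset.ssubset_iff_of_subset hsub3).2 ⟨y, hyin, hyout⟩)
          omega
        · have hU0in : U0 ∈ univ.powerset.filter
              (fun U : Finset S => IsUpSet U ∧ ∑ z ∈ U, P z < ∑ z ∈ U, P' z) := by
            rw [Finset.mem_filter]
            exact ⟨Finset.mem_powerset.2 (Finset.subset_univ U0), hU0'.2.1,
              hslack U0 hU0'.2.1 hU0'.2.2.1 hU0'.2.2.2⟩
          have hU0out : U0 ∉ univ.powerset.filter
              (fun U : Finset S => IsUpSet U ∧ ∑ z ∈ U, P z < ∑ z ∈ U, P'' z) := by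
            rw [Finset.mem_filter]
            rintro ⟨-, -, hlt⟩
            rw [hsumU U0] at hlt
            simp only [hU0'.2.2.1, hU0'.2.2.2, if_true, if_false] at hlt
            rw [hc] at hlt
            linarith [hU0s]
          have := Finset.card_lt_card
            ((Finset.ssubset_iff_of_subset hsub1).2 ⟨U0, hU0in, hU0out⟩)
          omega
      have hm'' : strassenMeas P P'' ≤ n := by omega
      obtain ⟨q1, hq10, hq1r, hq1c, hq1s⟩ := ih P P'' hP hP''nn hsum'' hdom'' hm''
      -- elementary coupling between P'' and P'
      set q2 : S × S → ℝ := fun p =>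
        (if p.1 = p.2 then P' p.1 else 0) + (if p.1 = x ∧ p.2 = y then ε else 0)
          - (if p.1 = y ∧ p.2 = y then ε else 0) with hq2def
      have hq20 : ∀ p, 0 ≤ q2 p := by
        rintro ⟨b, c⟩
        rw [hq2def]
        dsimp only
        by_cases hbc : b = c
        · by_cases hby : b = y
          · have hcy : c = y := hbc.symm.trans hby
            have hyx : ¬(y = x) := fun h => hxyne h.symm
            simp only [hby, hcy]
            simp [hyx]
            have := hP y
            linarith
          · have hcy : c ≠ y := fun h => hby (hbc.trans h)
            simp only [hbc, if_pos rfl, hcy, and_false, if_false, add_zero, sub_zero]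
            exact hP' c
        · have h1 : ¬(b = y ∧ c = y) := by
            rintro ⟨rfl, rfl⟩; exact hbc rfl
          simp only [hbc, if_false, h1]
          by_cases h2 : b = x ∧ c = y
          · simp [h2]; linarith
          · simp only [h2, if_false]; linarith
      have hq2r : ∀ b, ∑ c, q2 (b, c) = P'' b := by
        intro b
        rw [hq2def]
        dsimp only
        rw [Finset.sum_sub_distrib, Finset.sum_add_distrib]
        have e1 : ∑ c, (if b = c then P' b else 0) = P' b := by
          simpa using Finset.sum_ite_eq (univ : Finset S) b (fun _ => P' b)
        have e2 : ∑ c, (if b = x ∧ c = y then ε else 0) = if b = x then ε else 0 := by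
          by_cases hb : b = x
          · simp only [hb, true_and, if_true]
            simpa using Finset.sum_ite_eq' (univ : Finset S) y (fun _ => ε)
          · simp [hb]
        have e3 : ∑ c, (if b = y ∧ c = y then ε else 0) = if b = y then ε else 0 := by
          by_cases hb : b = y
          · simp only [hb, true_and, if_true]
            simpa using Finset.sum_ite_eq' (univ : Finset S) y (fun _ => ε)
          · simp [hb]
        rw [e1, e2, e3]
      have hq2c : ∀ c, ∑ b, q2 (b, c) = P' c := by
        intro c
        rw [hq2def]
        dsimp only
        rw [Finset.sum_sub_distrib, Finset.sum_add_distrib]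
        have e1 : ∑ b, (if b = c then P' b else 0) = P' c := by
          simpa using Finset.sum_ite_eq' (univ : Finset S) c (fun b => P' b)
        have e2 : ∑ b, (if b = x ∧ c = y then ε else 0) = if c = y then ε else 0 := by
          by_cases hc : c = y
          · simp only [hc, and_true]
            simpa using Finset.sum_ite_eq' (univ : Finset S) x (fun _ => ε)
          · simp [hc]
        have e3 : ∑ b, (if b = y ∧ c = y then ε else 0) = if c = y then ε else 0 := by
          by_cases hc : c = y
          · simp only [hc, and_true]
            simpa using Finset.sum_ite_eq' (univ : Finset S) y (fun _ => ε)
          · simp [hc]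
        rw [e1, e2, e3]
        ring
      have hq2s : ∀ p, q2 p ≠ 0 → p.1 ≤ p.2 := by
        rintro ⟨b, c⟩ hq
        by_cases hbc : b = c
        · exact le_of_eq hbc
        · rw [hq2def] at hq
          dsimp only at hq
          have h1 : ¬(b = y ∧ c = y) := by rintro ⟨rfl, rfl⟩; exact hbc rfl
          simp only [hbc, if_false, h1, sub_zero, zero_add] at hq
          by_cases h2 : b = x ∧ c = y
          · rw [h2.1, h2.2]; exact le_of_lt hxy
          · simp [h2] at hq
      exact strassen_compose P P'' P' q1 q2 hq10 hq1r hq1c hq1s hq20 hq2r hq2c hq2s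
    · push_neg at hex
      exact strassen_diag P P' hP (fun z => hex z) hsum

end Strassen

/-- Strassen's theorem for probability vectors on a finite poset:
stochastic domination is equivalent to existence of a monotone coupling. -/
theorem stmt_0 {S : Type*} [Fintype S] [PartialOrder S]
    (P P' : S → ℝ) (hP : ∀ x, 0 ≤ P x) (hP' : ∀ x, 0 ≤ P' x)
    (hP1 : ∑ x, P x = 1) (hP'1 : ∑ x, P' x = 1) :
    (∀ U : Finset S, (∀ x ∈ U, ∀ y, x ≤ y → y ∈ U) →
        ∑ x ∈ U, P x ≤ ∑ x ∈ U, P' x) ↔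
      ∃ q : S × S → ℝ, (∀ p, 0 ≤ q p) ∧
        (∀ x, ∑ y, q (x, y) = P x) ∧
        (∀ y, ∑ x, q (x, y) = P' y) ∧
        (∀ p, q p ≠ 0 → p.1 ≤ p.2) := by
  classical
  constructor
  · intro hdom
    exact strassen_main (strassenMeas P P') P P' hP hP'
      (by rw [hP1, hP'1]) (fun U hU => hdom U hU) le_rfl
  · rintro ⟨q, hq0, hq1, hq2, hq3⟩ U hU
    have h1 : ∑ x ∈ U, P x = ∑ p ∈ U ×ˢ (Finset.univ : Finset S), q p := by
      rw [Finset.sum_product]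
      exact Finset.sum_congr rfl fun a _ => (hq1 a).symm
    have h2 : ∑ y ∈ U, P' y = ∑ p ∈ (Finset.univ : Finset S) ×ˢ U, q p := by
      rw [Finset.sum_product_right]
      exact Finset.sum_congr rfl fun b _ => (hq2 b).symm
    have h3 : ∑ p ∈ U ×ˢ (Finset.univ : Finset S), q p = ∑ p ∈ U ×ˢ U, q p := by
      symm
      apply Finset.sum_subset
      · exact Finset.product_subset_product (Finset.Subset.refl U) (Finset.subset_univ U)
      · intro p hp hnp
        by_contra hq
        have hle := hq3 p hq
        have hp1 : p.1 ∈ U := (Finset.mem_product.1 hp).1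
        have hp2 : p.2 ∈ U := hU p.1 hp1 p.2 hle
        exact hnp (Finset.mem_product.2 ⟨hp1, hp2⟩)
    have h4 : ∑ p ∈ U ×ˢ U, q p ≤ ∑ p ∈ (Finset.univ : Finset S) ×ˢ U, q p := by
      apply Finset.sum_le_sum_of_subset_of_nonneg
      · exact Finset.product_subset_product (Finset.subset_univ U) (Finset.Subset.refl U)
      · intro p _ _
        exact hq0 p
    rw [h1, h2, h3]
    exact h4
end

section
/- Let A be the 6-element poset with minimal elements b₀, b₁, b₂ and maximal elements t₀, t₁, t₂, where b₀ < t₀, t₂; b₁ < t₀, t₁; b₂ < t₁, t₂ (the 6-crown). Then the graph of interlaced relation on {b₀, b₁, b₂} is the triangle, and no spanning tree of it is locally connected; hence A is not synchronizable for Class W_⋆. -/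
/-- The minimal elements of a poset `A`. -/
abbrev Dmin (A : Type*) [PartialOrder A] : Type _ := {a : A // IsMin a}

/-- The graph of interlaced relation on the minimal elements of `A`. -/
def interlaced (A : Type*) [PartialOrder A] : SimpleGraph (Dmin A) where
  Adj β β' := β ≠ β' ∧ ∃ α : A, β.1 ≤ α ∧ β'.1 ≤ α
  symm := by
    constructor
    rintro β β' ⟨hne, α, h1, h2⟩
    exact ⟨hne.symm, α, h2, h1⟩
  loopless := by constructor; rintro β ⟨hne, -⟩; exact hne rfl

/-- Local connectedness of a spanning tree of the graph of interlaced relation. -/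
def LocallyConnected {A : Type*} [PartialOrder A] (T : SimpleGraph (Dmin A)) : Prop :=
  ∀ α : A, (T.induce {β : Dmin A | β.1 ≤ α}).Connected

lemma two_elt_induced_adj {V : Type*} (G : SimpleGraph V) (s : Set V)
    (h : (G.induce s).Connected) (x y : V) (hx : x ∈ s) (hy : y ∈ s) (hxy : x ≠ y)
    (hs : ∀ z ∈ s, z = x ∨ z = y) : G.Adj x y := by
  obtain ⟨w⟩ := h ⟨x, hx⟩ ⟨y, hy⟩
  cases w with
  | nil => exact absurd rfl hxy
  | cons h' w' =>
    rename_i v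
    rcases hs v.1 v.2 with hv | hv
    · exact absurd (by simpa [hv] using h' : G.Adj x x) (G.loopless.irrefl x)
    · simpa [hv] using (h' : G.Adj _ _)

/-- The 6-crown poset, with minimal elements `b₀, b₁, b₂` and maximal elements
`t₀, t₁, t₂` with `b₀ < t₀, t₂`, `b₁ < t₀, t₁`, `b₂ < t₁, t₂`, has the triangle as graph
of interlaced relation, and no spanning tree of it is locally connected; hence the
6-crown is not synchronizable for Class `W⋆`. -/
theorem stmt_6 {A : Type*} [Fintype A] [PartialOrder A]
    (b0 b1 b2 t0 t1 t2 : A)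
    (hnd : [b0, b1, b2, t0, t1, t2].Nodup)
    (hall : ∀ x : A, x ∈ [b0, b1, b2, t0, t1, t2])
    (hle : ∀ x y : A, x ≤ y ↔ x = y ∨
      (x = b0 ∧ y = t0) ∨ (x = b0 ∧ y = t2) ∨ (x = b1 ∧ y = t0) ∨
      (x = b1 ∧ y = t1) ∨ (x = b2 ∧ y = t1) ∨ (x = b2 ∧ y = t2)) :
    interlaced A = ⊤ ∧
    ¬ ∃ T : SimpleGraph (Dmin A), T ≤ interlaced A ∧ T.IsTree ∧ LocallyConnected T := by
  simp only [List.nodup_cons, List.mem_cons, List.not_mem_nil, List.nodup_nil,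
    List.mem_singleton, or_false, not_or] at hnd
  obtain ⟨⟨h01, h02, h0t0, h0t1, h0t2⟩, ⟨h12, h1t0, h1t1, h1t2⟩, ⟨h2t0, h2t1, h2t2⟩,
    ⟨ht01, ht02⟩, ht12, -⟩ := hnd
  have l00 : b0 ≤ t0 := (hle _ _).2 (Or.inr (Or.inl ⟨rfl, rfl⟩))
  have l02 : b0 ≤ t2 := (hle _ _).2 (Or.inr (Or.inr (Or.inl ⟨rfl, rfl⟩)))
  have l10 : b1 ≤ t0 := (hle _ _).2 (Or.inr (Or.inr (Or.inr (Or.inl ⟨rfl, rfl⟩))))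
  have l11 : b1 ≤ t1 := (hle _ _).2 (Or.inr (Or.inr (Or.inr (Or.inr (Or.inl ⟨rfl, rfl⟩)))))
  have l21 : b2 ≤ t1 := (hle _ _).2 (Or.inr (Or.inr (Or.inr (Or.inr (Or.inr (Or.inl ⟨rfl, rfl⟩))))))
  have l22 : b2 ≤ t2 := (hle _ _).2 (Or.inr (Or.inr (Or.inr (Or.inr (Or.inr (Or.inr ⟨rfl, rfl⟩))))))
  -- minimality of b0, b1, b2
  have hmin : ∀ b ∈ [b0, b1, b2], IsMin b := by
    intro b hb x hx
    simp only [List.mem_cons, List.mem_singleton, List.not_mem_nil, or_false] at hb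
    rcases (hle x b).1 hx with h | ⟨-, h⟩ | ⟨-, h⟩ | ⟨-, h⟩ | ⟨-, h⟩ | ⟨-, h⟩ | ⟨-, h⟩
    · exact h ▸ le_rfl
    all_goals (subst h; rcases hb with h | h | h <;> simp_all)
  have hb0 : IsMin b0 := hmin b0 (by simp)
  have hb1 : IsMin b1 := hmin b1 (by simp)
  have hb2 : IsMin b2 := hmin b2 (by simp)
  -- classification of minimal elements
  have hclass : ∀ β : Dmin A, β.1 = b0 ∨ β.1 = b1 ∨ β.1 = b2 := by
    rintro ⟨x, hx⟩
    have hx6 := hall x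
    simp only [List.mem_cons, List.mem_singleton, List.not_mem_nil, or_false] at hx6
    rcases hx6 with h | h | h | h | h | h
    · exact Or.inl h
    · exact Or.inr (Or.inl h)
    · exact Or.inr (Or.inr h)
    · exfalso
      have hxb := hx (show b0 ≤ x by rw [h]; exact l00)
      rcases (hle x b0).1 hxb with h' | ⟨h', h''⟩ | ⟨h', h''⟩ | ⟨h', h''⟩ |
        ⟨h', h''⟩ | ⟨h', h''⟩ | ⟨h', h''⟩ <;> simp_all
    · exfalso
      have hxb := hx (show b1 ≤ x by rw [h]; exact l11)
      rcases (hle x b1).1 hxb with h' | ⟨h', h''⟩ | ⟨h', h''⟩ | ⟨h', h''⟩ |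
        ⟨h', h''⟩ | ⟨h', h''⟩ | ⟨h', h''⟩ <;> simp_all
    · exfalso
      have hxb := hx (show b0 ≤ x by rw [h]; exact l02)
      rcases (hle x b0).1 hxb with h' | ⟨h', h''⟩ | ⟨h', h''⟩ | ⟨h', h''⟩ |
        ⟨h', h''⟩ | ⟨h', h''⟩ | ⟨h', h''⟩ <;> simp_all
  set B0 : Dmin A := ⟨b0, hb0⟩ with hB0def
  set B1 : Dmin A := ⟨b1, hb1⟩ with hB1def
  set B2 : Dmin A := ⟨b2, hb2⟩ with hB2def
  have hB01 : B0 ≠ B1 := fun h => h01 (congrArg Subtype.val h)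
  have hB02 : B0 ≠ B2 := fun h => h02 (congrArg Subtype.val h)
  have hB12 : B1 ≠ B2 := fun h => h12 (congrArg Subtype.val h)
  constructor
  · ext β β'
    simp only [interlaced, SimpleGraph.top_adj]
    constructor
    · rintro ⟨hne, -⟩; exact hne
    · intro hne
      refine ⟨hne, ?_⟩
      rcases hclass β with h | h | h <;> rcases hclass β' with h' | h' | h' <;> rw [h, h']
      · exact absurd (Subtype.ext (h.trans h'.symm)) hne
      · exact ⟨t0, l00, l10⟩
      · exact ⟨t2, l02, l22⟩
      · exact ⟨t0, l10, l00⟩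
      · exact absurd (Subtype.ext (h.trans h'.symm)) hne
      · exact ⟨t1, l11, l21⟩
      · exact ⟨t2, l22, l02⟩
      · exact ⟨t1, l21, l11⟩
      · exact absurd (Subtype.ext (h.trans h'.symm)) hne
  · rintro ⟨T, -, hTree, hLC⟩
    have key : ∀ (t : A) (x y : Dmin A), x ≠ y → x.1 ≤ t → y.1 ≤ t →
        (∀ β : Dmin A, β.1 ≤ t → β = x ∨ β = y) → T.Adj x y := by
      intro t x y hxy hxt hyt hcl
      exact two_elt_induced_adj T {β : Dmin A | β.1 ≤ t} (hLC t) x y hxt hyt hxy hcl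
    have e01 : T.Adj B0 B1 := by
      refine key t0 B0 B1 hB01 l00 l10 ?_
      intro β hβ
      rcases hclass β with h | h | h
      · exact Or.inl (Subtype.ext h)
      · exact Or.inr (Subtype.ext h)
      · exfalso; rw [h] at hβ
        rcases (hle b2 t0).1 hβ with h' | ⟨h', h''⟩ | ⟨h', h''⟩ | ⟨h', h''⟩ |
          ⟨h', h''⟩ | ⟨h', h''⟩ | ⟨h', h''⟩ <;> simp_all
    have e12 : T.Adj B1 B2 := by
      refine key t1 B1 B2 hB12 l11 l21 ?_
      intro β hβ
      rcases hclass β with h | h | h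
      · exfalso; rw [h] at hβ
        rcases (hle b0 t1).1 hβ with h' | ⟨h', h''⟩ | ⟨h', h''⟩ | ⟨h', h''⟩ |
          ⟨h', h''⟩ | ⟨h', h''⟩ | ⟨h', h''⟩ <;> simp_all
      · exact Or.inl (Subtype.ext h)
      · exact Or.inr (Subtype.ext h)
    have e02 : T.Adj B0 B2 := by
      refine key t2 B0 B2 hB02 l02 l22 ?_
      intro β hβ
      rcases hclass β with h | h | h
      · exact Or.inl (Subtype.ext h)
      · exfalso; rw [h] at hβ
        rcases (hle b1 t2).1 hβ with h' | ⟨h', h''⟩ | ⟨h', h''⟩ | ⟨h', h''⟩ |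
          ⟨h', h''⟩ | ⟨h', h''⟩ | ⟨h', h''⟩ <;> simp_all
      · exact Or.inr (Subtype.ext h)
    have hacyc := hTree.IsAcyclic
    rw [SimpleGraph.isAcyclic_iff_path_unique] at hacyc
    let p : T.Path B0 B1 := SimpleGraph.Path.singleton e01
    let q : T.Path B0 B1 :=
      ⟨SimpleGraph.Walk.cons e02 (SimpleGraph.Walk.cons e12.symm SimpleGraph.Walk.nil),
        by simp [SimpleGraph.Walk.isPath_def, hB01, hB02, hB12, Ne.symm hB12]⟩
    have hpq := hacyc p q
    have hlen := congrArg (fun r : T.Path B0 B1 => r.1.length) hpq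
    simp [p, q, SimpleGraph.Path.singleton] at hlen
end

section
/- Let A be a finite poset with minimal-element graph G_A (vertices the minimal elements D_A, edges {β,β'} when β,β' ≤ α for some α) and maximal-element graph G_{A*} (vertices the maximal elements D_{A*}, edges {β,β'} when β,β' ≥ α for some α). Let T and T* be locally connected spanning trees of G_A and G_{A*} respectively. Then the subgraph of the Cartesian product graph T □ T* induced on the vertex set {(α, β) ∈ D_A × D_{A*} : α ≤ β in A} is connected. -/
/-- The maximal elements of a poset `A`. -/
abbrev Dmax (A : Type*) [PartialOrder A] : Type _ := {a : A // IsMax a}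

/-- The dual graph of interlaced relation on the maximal elements of `A`. -/
def interlacedMax (A : Type*) [PartialOrder A] : SimpleGraph (Dmax A) where
  Adj β β' := β ≠ β' ∧ ∃ α : A, α ≤ β.1 ∧ α ≤ β'.1
  symm := by
    constructor
    rintro β β' ⟨hne, α, h1, h2⟩
    exact ⟨hne.symm, α, h2, h1⟩
  loopless := by constructor; rintro β ⟨hne, -⟩; exact hne rfl

/-- Dual local connectedness for spanning trees on the maximal elements. -/
def LocallyConnectedMax {A : Type*} [PartialOrder A] (T : SimpleGraph (Dmax A)) : Prop :=
  ∀ α : A, (T.induce {β : Dmax A | α ≤ β.1}).Connected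

/-- The comparability graph of a poset (connectivity of which is equivalent to
connectivity of the Hasse diagram). -/
def comparabilityGraph (A : Type*) [PartialOrder A] : SimpleGraph A where
  Adj x y := x ≠ y ∧ (x ≤ y ∨ y ≤ x)
  symm := by constructor; rintro x y ⟨hne, h⟩; exact ⟨hne.symm, h.symm⟩
  loopless := by constructor; rintro x ⟨hne, -⟩; exact hne rfl

/-- The Cartesian product `T □ T*` restricted to the pairs `(α, β)` with `α ≤ β`. -/
def prodGraph {A : Type*} [PartialOrder A]
    (T : SimpleGraph (Dmin A)) (T' : SimpleGraph (Dmax A)) :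
    SimpleGraph {p : Dmin A × Dmax A // p.1.1 ≤ p.2.1} where
  Adj p q := (p.1.1 = q.1.1 ∧ T'.Adj p.1.2 q.1.2) ∨ (T.Adj p.1.1 q.1.1 ∧ p.1.2 = q.1.2)
  symm := by
    constructor
    rintro p q (⟨h1, h2⟩ | ⟨h1, h2⟩)
    · exact Or.inl ⟨h1.symm, h2.symm⟩
    · exact Or.inr ⟨h1.symm, h2.symm⟩
  loopless := by
    constructor
    rintro p (⟨-, h⟩ | ⟨h, -⟩) <;> exact h.ne rfl

/- Any two points with the same minimal coordinate are joined inside a fibre, by dual local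
connectedness; an edge `β — β'` of `T` is crossed at a common maximal upper bound of `β` and `β'`,
which exists since `T` is a subgraph of the interlacing graph. Following a path of `T` between the
minimal coordinates therefore connects any two points. -/

open SimpleGraph

section

variable {A : Type*} [PartialOrder A] {T : SimpleGraph (Dmin A)} {T' : SimpleGraph (Dmax A)}

lemma exists_dmax_ge [Finite A] (a : A) : ∃ γ : Dmax A, a ≤ γ.1 :=
  let ⟨b, hab, hb⟩ := Finite.exists_le_maximal (p := fun _ : A => True) trivial
  ⟨⟨b, maximal_true.1 hb⟩, hab⟩

lemma exists_dmin_le [Finite A] (a : A) : ∃ β : Dmin A, β.1 ≤ a :=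
  let ⟨b, hba, hb⟩ := Finite.exists_le_minimal (p := fun _ : A => True) trivial
  ⟨⟨b, minimal_true.1 hb⟩, hba⟩

lemma prodGraph_reachable_of_fst_eq (hT'lc : LocallyConnectedMax T')
    {p q : {p : Dmin A × Dmax A // p.1.1 ≤ p.2.1}} (h : p.1.1 = q.1.1) :
    (prodGraph T T').Reachable p q := by
  obtain ⟨⟨β, γ⟩, hp⟩ := p
  obtain ⟨⟨β', γ'⟩, hq⟩ := q
  obtain rfl : β = β' := h
  let fibre : T'.induce {δ : Dmax A | β.1 ≤ δ.1} →g prodGraph T T' :=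
    ⟨fun δ => ⟨(β, δ.1), δ.2⟩, fun hδ => Or.inl ⟨rfl, hδ⟩⟩
  exact ((hT'lc β.1).preconnected ⟨γ, hp⟩ ⟨γ', hq⟩).map fibre

lemma prodGraph_reachable_of_adj_fst [Finite A] (hT : T ≤ interlaced A)
    (hT'lc : LocallyConnectedMax T') {p q : {p : Dmin A × Dmax A // p.1.1 ≤ p.2.1}}
    (h : T.Adj p.1.1 q.1.1) : (prodGraph T T').Reachable p q := by
  obtain ⟨-, α, hpα, hqα⟩ := hT h
  obtain ⟨δ, hαδ⟩ := exists_dmax_ge α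
  let p' : {p : Dmin A × Dmax A // p.1.1 ≤ p.2.1} := ⟨(p.1.1, δ), hpα.trans hαδ⟩
  let q' : {p : Dmin A × Dmax A // p.1.1 ≤ p.2.1} := ⟨(q.1.1, δ), hqα.trans hαδ⟩
  have hcross : (prodGraph T T').Adj p' q' := Or.inr ⟨h, rfl⟩
  exact (prodGraph_reachable_of_fst_eq (p := p) (q := p') hT'lc rfl).trans
    (hcross.reachable.trans (prodGraph_reachable_of_fst_eq (p := q') (q := q) hT'lc rfl))

lemma prodGraph_reachable_of_reachable_fst [Finite A] (hT : T ≤ interlaced A)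
    (hT'lc : LocallyConnectedMax T') {p q : {p : Dmin A × Dmax A // p.1.1 ≤ p.2.1}}
    (h : T.Reachable p.1.1 q.1.1) : (prodGraph T T').Reachable p q := by
  obtain ⟨w⟩ := h
  suffices ∀ {b c : Dmin A} (_ : T.Walk b c) (p q : {p : Dmin A × Dmax A // p.1.1 ≤ p.2.1}),
      p.1.1 = b → q.1.1 = c → (prodGraph T T').Reachable p q from this w p q rfl rfl
  intro b c w
  induction w with
  | nil => exact fun p q hp hq => prodGraph_reachable_of_fst_eq hT'lc (hp.trans hq.symm)
  | @cons b b' c hadj _ ih =>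
    intro p q hp hq
    obtain ⟨δ, hδ⟩ := exists_dmax_ge b'.1
    subst hp
    exact (prodGraph_reachable_of_adj_fst hT hT'lc hadj).trans (ih ⟨(b', δ), hδ⟩ q rfl hq)

end

theorem stmt_7_general {A : Type*} [Fintype A] [Nonempty A] [PartialOrder A]
    (T : SimpleGraph (Dmin A)) (hT : T ≤ interlaced A ∧ T.IsTree)
    (T' : SimpleGraph (Dmax A))
    (hT'lc : LocallyConnectedMax T') :
    (prodGraph T T').Connected := by
  obtain ⟨a⟩ := ‹Nonempty A›
  obtain ⟨β, -⟩ := exists_dmin_le a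
  obtain ⟨γ, hβγ⟩ := exists_dmax_ge β.1
  have : Nonempty {p : Dmin A × Dmax A // p.1.1 ≤ p.2.1} := ⟨⟨(β, γ), hβγ⟩⟩
  exact (connected_iff _).2 ⟨fun p q => prodGraph_reachable_of_reachable_fst hT.1 hT'lc
    (hT.2.connected.preconnected _ _), this⟩

/-- If `T` and `T*` are locally connected spanning trees of the graphs of interlaced
relation on the minimal and the maximal elements respectively, then the restricted
Cartesian product `T □ T*` is connected. -/
theorem stmt_7 {A : Type*} [Fintype A] [Nonempty A] [PartialOrder A]
    (hconn : (comparabilityGraph A).Connected)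
    (T : SimpleGraph (Dmin A)) (hT : T ≤ interlaced A ∧ T.IsTree)
    (hTlc : LocallyConnected T)
    (T' : SimpleGraph (Dmax A)) (hT' : T' ≤ interlacedMax A ∧ T'.IsTree)
    (hT'lc : LocallyConnectedMax T') :
    (prodGraph T T').Connected :=
  stmt_7_general T hT T' hT'lc
end

section
/- Let A be a finite poset that is synchronizable for Class W_⋆ (i.e., G_A admits a locally connected spanning tree), with edge lengths θ(β,β') = |{γ ∈ D_A : A(β) ∩ A(β') ⊆ A(γ)}|. Then a spanning tree T of G_A is locally connected if and only if T attains the minimum weight among all spanning trees of G_A. -/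
open scoped Classical

/-- The length `θ(β,β') = |Θ(β,β')|` of an edge, where
`Θ(β,β') = {γ ∈ D_A : A(β) ∩ A(β') ⊆ A(γ)}`. -/
noncomputable def edgeLength {A : Type*} [Fintype A] [PartialOrder A]
    (e : Sym2 (Dmin A)) : ℕ :=
  Nat.card {γ : Dmin A // ∀ α : A, (∀ β ∈ e, (β : Dmin A).1 ≤ α) → γ.1 ≤ α}

/-- The weight of a graph on the minimal elements with respect to the lengths `θ`. -/
noncomputable def weightA {A : Type*} [Fintype A] [PartialOrder A]
    (T : SimpleGraph (Dmin A)) : ℕ :=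
  ∑ e : Sym2 (Dmin A), if e ∈ T.edgeSet then edgeLength e else 0


section GeneralGraph
namespace SimpleGraph
variable {V : Type*}

/-- A vertex with no incident edges that lies on a walk must be the start. -/
lemma eq_start_of_isolated {G : SimpleGraph V} {x u v : V} (hx : ∀ y, ¬ G.Adj y x)
    (q : G.Walk u v) : x ∈ q.support → x = u := by
  induction q with
  | nil => simp
  | cons h p ih =>
    intro hs
    rw [Walk.support_cons, List.mem_cons] at hs
    rcases hs with rfl | hs
    · rfl
    · cases ih hs
      exact absurd h (hx _)

lemma reachable_induce_of_walk {G : SimpleGraph V} {S : Set V} {u v : V} (q : G.Walk u v)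
    (hS : ∀ x ∈ q.support, x ∈ S) (hu : u ∈ S) (hv : v ∈ S) :
    (G.induce S).Reachable ⟨u, hu⟩ ⟨v, hv⟩ := by
  induction q with
  | nil => exact Reachable.refl _
  | @cons a w c h p ih =>
    have hw : w ∈ S := hS w (by simp)
    have h1 : (G.induce S).Adj ⟨a, hu⟩ ⟨w, hw⟩ := h
    exact h1.reachable.trans (ih (fun x hx => hS x (by simp [hx])) hw hv)

lemma reach_decomp {G : SimpleGraph V} {a b : V}
    (hnr : ¬(G \ fromEdgeSet {s(a,b)}).Reachable a b) {u v : V} (h : G.Reachable u v) :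
    (G \ fromEdgeSet {s(a,b)}).Reachable u v ∨
      ((G \ fromEdgeSet {s(a,b)}).Reachable u a ∧ (G \ fromEdgeSet {s(a,b)}).Reachable v b) ∨
      ((G \ fromEdgeSet {s(a,b)}).Reachable u b ∧ (G \ fromEdgeSet {s(a,b)}).Reachable v a) := by
  set G' := G \ fromEdgeSet {s(a,b)} with hG'
  obtain ⟨p⟩ := h
  induction p with
  | nil => exact Or.inl (Reachable.refl _)
  | @cons c w d h p ih =>
    by_cases hd : G'.Adj c w
    · rcases ih with h1 | ⟨h1, h2⟩ | ⟨h1, h2⟩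
      · exact Or.inl (hd.reachable.trans h1)
      · exact Or.inr (Or.inl ⟨hd.reachable.trans h1, h2⟩)
      · exact Or.inr (Or.inr ⟨hd.reachable.trans h1, h2⟩)
    · have he : s(c, w) = s(a, b) := by
        by_contra hne
        refine hd ?_
        rw [hG', sdiff_adj]
        exact ⟨h, by simp [fromEdgeSet_adj, hne]⟩
      rw [Sym2.eq_iff] at he
      rcases he with ⟨rfl, rfl⟩ | ⟨rfl, rfl⟩
      · -- edge from a to b
        rcases ih with h1 | ⟨h1, h2⟩ | ⟨h1, h2⟩
        · exact Or.inr (Or.inl ⟨Reachable.refl _, h1.symm⟩)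
        · exact absurd h1.symm hnr
        · exact Or.inl h2.symm
      · -- edge from b to a
        rcases ih with h1 | ⟨h1, h2⟩ | ⟨h1, h2⟩
        · exact Or.inr (Or.inr ⟨Reachable.refl _, h1.symm⟩)
        · exact Or.inl h2.symm
        · exact absurd h1 hnr


section Split
variable (G : SimpleGraph V) (a b : V)

/-- forward map for the component-splitting equivalence -/
noncomputable def splitFwd (c : (G \ fromEdgeSet {s(a,b)}).ConnectedComponent) :
    G.ConnectedComponent ⊕ Unit :=
  Quot.lift
    (fun v => if (G \ fromEdgeSet {s(a,b)}).Reachable v b then Sum.inr ()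
              else Sum.inl (G.connectedComponentMk v))
    (by
      intro u v huv
      by_cases hb : (G \ fromEdgeSet {s(a,b)}).Reachable v b
      · rw [if_pos hb, if_pos (huv.trans hb)]
      · rw [if_neg hb, if_neg (fun h => hb (huv.symm.trans h))]
        exact congrArg _ (ConnectedComponent.sound (huv.mono sdiff_le))) c

@[simp] lemma splitFwd_mk (v : V) :
    splitFwd G a b ((G \ fromEdgeSet {s(a,b)}).connectedComponentMk v) =
      if (G \ fromEdgeSet {s(a,b)}).Reachable v b then Sum.inr ()
      else Sum.inl (G.connectedComponentMk v) := rfl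

/-- backward map for the component-splitting equivalence -/
noncomputable def splitBwd (hnr : ¬(G \ fromEdgeSet {s(a,b)}).Reachable a b)
    (hdec : ∀ {u v : V}, G.Reachable u v →
      (G \ fromEdgeSet {s(a,b)}).Reachable u v ∨
      ((G \ fromEdgeSet {s(a,b)}).Reachable u a ∧ (G \ fromEdgeSet {s(a,b)}).Reachable v b) ∨
      ((G \ fromEdgeSet {s(a,b)}).Reachable u b ∧ (G \ fromEdgeSet {s(a,b)}).Reachable v a))
    (c : G.ConnectedComponent ⊕ Unit) : (G \ fromEdgeSet {s(a,b)}).ConnectedComponent :=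
  Sum.elim
    (Quot.lift
      (fun v => if (G \ fromEdgeSet {s(a,b)}).Reachable v b
                then (G \ fromEdgeSet {s(a,b)}).connectedComponentMk a
                else (G \ fromEdgeSet {s(a,b)}).connectedComponentMk v)
      (by
        intro u v huv
        rcases hdec huv with h1 | ⟨h1, h2⟩ | ⟨h1, h2⟩
        · by_cases hb : (G \ fromEdgeSet {s(a,b)}).Reachable v b
          · rw [if_pos hb, if_pos (h1.trans hb)]
          · rw [if_neg hb, if_neg (fun h => hb (h1.symm.trans h))]
            exact ConnectedComponent.sound h1
        · have hub : ¬ (G \ fromEdgeSet {s(a,b)}).Reachable u b :=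
            fun h => hnr (h1.symm.trans h)
          rw [if_neg hub, if_pos h2]
          exact ConnectedComponent.sound h1
        · have hvb : ¬ (G \ fromEdgeSet {s(a,b)}).Reachable v b :=
            fun h => hnr (h2.symm.trans h)
          rw [if_pos h1, if_neg hvb]
          exact (ConnectedComponent.sound h2).symm))
    (fun _ => (G \ fromEdgeSet {s(a,b)}).connectedComponentMk b) c

lemma splitBwd_inl_mk (hnr) (hdec) (v : V) :
    splitBwd G a b hnr @hdec (Sum.inl (G.connectedComponentMk v)) =
      if (G \ fromEdgeSet {s(a,b)}).Reachable v b
      then (G \ fromEdgeSet {s(a,b)}).connectedComponentMk a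
      else (G \ fromEdgeSet {s(a,b)}).connectedComponentMk v := rfl

/-- The component-splitting equivalence. -/
noncomputable def splitEquiv (hab : G.Adj a b)
    (hnr : ¬(G \ fromEdgeSet {s(a,b)}).Reachable a b)
    (hdec : ∀ {u v : V}, G.Reachable u v →
      (G \ fromEdgeSet {s(a,b)}).Reachable u v ∨
      ((G \ fromEdgeSet {s(a,b)}).Reachable u a ∧ (G \ fromEdgeSet {s(a,b)}).Reachable v b) ∨
      ((G \ fromEdgeSet {s(a,b)}).Reachable u b ∧ (G \ fromEdgeSet {s(a,b)}).Reachable v a)) :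
    (G \ fromEdgeSet {s(a,b)}).ConnectedComponent ≃ (G.ConnectedComponent ⊕ Unit) where
  toFun := splitFwd G a b
  invFun := splitBwd G a b hnr @hdec
  left_inv := by
    intro c
    induction c using ConnectedComponent.ind with
    | _ v =>
      rw [splitFwd_mk]
      by_cases hb : (G \ fromEdgeSet {s(a,b)}).Reachable v b
      · rw [if_pos hb]
        exact (ConnectedComponent.sound hb).symm
      · rw [if_neg hb, splitBwd_inl_mk, if_neg hb]
  right_inv := by
    rintro (c | ⟨⟩)
    · induction c using ConnectedComponent.ind with
      | _ v =>
        rw [splitBwd_inl_mk]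
        by_cases hb : (G \ fromEdgeSet {s(a,b)}).Reachable v b
        · rw [if_pos hb, splitFwd_mk,
            if_neg (fun h => hnr h), Sum.inl.injEq]
          exact ConnectedComponent.sound (hab.reachable.trans ((hb.mono sdiff_le).symm))
        · rw [if_neg hb, splitFwd_mk, if_neg hb]
    · show splitFwd G a b ((G \ fromEdgeSet {s(a,b)}).connectedComponentMk b) = _
      rw [splitFwd_mk, if_pos (Reachable.refl b)]

end Split

lemma IsAcyclic.card_conncomp [Finite V] {G : SimpleGraph V} (hG : G.IsAcyclic) :
    Nat.card G.ConnectedComponent + Nat.card G.edgeSet = Nat.card V := by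
  generalize hn : Nat.card G.edgeSet = n
  induction n generalizing G with
  | zero =>
    have hie : IsEmpty G.edgeSet := by
      rw [Nat.card_eq_zero] at hn
      rcases hn with h | h
      · exact h
      · haveI := h
        exact (not_finite ↥G.edgeSet).elim
    have hbot : G = ⊥ := by
      rw [← edgeSet_eq_empty]
      exact Set.isEmpty_coe_sort.mp hie
    subst hbot
    have hcard : Nat.card (⊥ : SimpleGraph V).ConnectedComponent = Nat.card V := by
      refine (Nat.card_congr (Equiv.ofBijective
        (fun v => (⊥ : SimpleGraph V).connectedComponentMk v) ⟨?_, ?_⟩)).symm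
      · intro u v h
        exact reachable_bot.mp (ConnectedComponent.exact h)
      · exact fun c => c.exists_rep
    omega
  | succ n ih =>
    have hpos : Nonempty G.edgeSet := by
      refine (Nat.card_pos_iff.mp ?_).1
      omega
    obtain ⟨⟨e, he⟩⟩ := hpos
    induction e using Sym2.ind with
    | _ a b =>
      have hab : G.Adj a b := G.mem_edgeSet.mp he
      have hbridge := isAcyclic_iff_forall_adj_isBridge.mp hG hab
      have hnr : ¬(G \ fromEdgeSet {s(a,b)}).Reachable a b := isBridge_iff.mp hbridge
      have hdec : ∀ {u v : V}, G.Reachable u v →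
          (G \ fromEdgeSet {s(a,b)}).Reachable u v ∨
          ((G \ fromEdgeSet {s(a,b)}).Reachable u a ∧ (G \ fromEdgeSet {s(a,b)}).Reachable v b) ∨
          ((G \ fromEdgeSet {s(a,b)}).Reachable u b ∧ (G \ fromEdgeSet {s(a,b)}).Reachable v a) :=
        fun h => reach_decomp hnr h
      have hacy' : (G \ fromEdgeSet {s(a,b)}).IsAcyclic := by
        intro v c hc
        exact hG (c.mapLe sdiff_le) ((Walk.mapLe_isCycle sdiff_le).mpr hc)
      have hset : (G \ fromEdgeSet {s(a,b)}).edgeSet = G.edgeSet \ {s(a,b)} := by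
        rw [edgeSet_sdiff, edgeSet_fromEdgeSet, edgeSet_sdiff_sdiff_isDiag]
      have hcard' : Nat.card (G \ fromEdgeSet {s(a,b)}).edgeSet = n := by
        rw [hset, Nat.card_coe_set_eq, Set.ncard_diff_singleton_of_mem he,
          ← Nat.card_coe_set_eq, hn]
        omega
      have hcomp : Nat.card (G \ fromEdgeSet {s(a,b)}).ConnectedComponent =
          Nat.card G.ConnectedComponent + 1 := by
        rw [Nat.card_congr (splitEquiv G a b hab hnr hdec), Nat.card_sum]
        simp
      have := ih hacy' hcard'
      omega

instance _root_.SimpleGraph.ConnectedComponent.instFiniteCC [Finite V] (G : SimpleGraph V) :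
    Finite G.ConnectedComponent := Quot.finite _

lemma IsTree.nat_card_edgeSet [Finite V] {G : SimpleGraph V} (hG : G.IsTree) :
    Nat.card G.edgeSet + 1 = Nat.card V := by
  have h1 := hG.2.card_conncomp
  have h2 : Nat.card G.ConnectedComponent = 1 := by
    rw [Nat.card_eq_one_iff_unique]
    refine ⟨hG.1.preconnected.subsingleton_connectedComponent, ?_⟩
    haveI := hG.1.nonempty
    exact ⟨G.connectedComponentMk (Classical.arbitrary V)⟩
  omega

lemma card_comp_le [Finite V] {G H : SimpleGraph V} (h : G ≤ H) :
    Nat.card H.ConnectedComponent ≤ Nat.card G.ConnectedComponent := by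
  apply Nat.card_le_card_of_surjective (ConnectedComponent.map (Hom.ofLE h))
  intro c
  induction c using ConnectedComponent.ind with
  | _ v => exact ⟨G.connectedComponentMk v, by simp⟩

lemma forest_compare [Finite V] {H F F₀ : SimpleGraph V} (hF : F ≤ H) (hF₀ : F₀ ≤ H)
    (haF : F.IsAcyclic) (haF₀ : F₀.IsAcyclic)
    (hspan : ∀ u v : V, H.Reachable u v → F₀.Reachable u v) :
    Nat.card F.edgeSet ≤ Nat.card F₀.edgeSet ∧
      ((∃ u v : V, H.Reachable u v ∧ ¬F.Reachable u v) →
        Nat.card F.edgeSet < Nat.card F₀.edgeSet) := by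
  have c1 := haF.card_conncomp
  have c2 := haF₀.card_conncomp
  have hF0H := card_comp_le hF₀
  have hHF := card_comp_le hF
  have hHF0 : Nat.card F₀.ConnectedComponent ≤ Nat.card H.ConnectedComponent := by
    apply Nat.card_le_card_of_injective (ConnectedComponent.map (Hom.ofLE hF₀))
    intro c d hcd
    induction c using ConnectedComponent.ind with
    | _ u =>
      induction d using ConnectedComponent.ind with
      | _ v =>
        simp only [ConnectedComponent.map_mk, Hom.ofLE_apply,
          ConnectedComponent.eq] at hcd
        exact ConnectedComponent.sound (hspan u v hcd)
  refine ⟨by omega, ?_⟩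
  rintro ⟨u, v, huv, hnuv⟩
  have hsurj : Function.Surjective
      (ConnectedComponent.map (Hom.ofLE hF)) := by
    intro c
    induction c using ConnectedComponent.ind with
    | _ w => exact ⟨F.connectedComponentMk w, by simp⟩
  have hstrict : Nat.card H.ConnectedComponent < Nat.card F.ConnectedComponent := by
    rcases Nat.lt_or_ge (Nat.card H.ConnectedComponent) (Nat.card F.ConnectedComponent)
      with hlt | hge
    · exact hlt
    · exfalso
      have hbij := hsurj.bijective_of_nat_card_le hge
      have heq : F.connectedComponentMk u = F.connectedComponentMk v := by
        apply hbij.1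
        simp only [ConnectedComponent.map_mk, Hom.ofLE_apply,
          ConnectedComponent.eq]
        exact huv
      exact hnuv (ConnectedComponent.exact heq)
  omega

end SimpleGraph

section Poset

open SimpleGraph

variable {A : Type*} [Fintype A] [PartialOrder A]

/-- Auxiliary graph: pairs interlaced via an upper bound avoiding `γ`. -/
def Hgam (γ : Dmin A) : SimpleGraph (Dmin A) where
  Adj β β' := β ≠ β' ∧ ∃ α : A, β.1 ≤ α ∧ β'.1 ≤ α ∧ ¬ γ.1 ≤ α
  symm := by constructor; rintro β β' ⟨hne, α, h1, h2, h3⟩; exact ⟨hne.symm, α, h2, h1, h3⟩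
  loopless := by constructor; rintro β ⟨hne, -⟩; exact hne rfl

/-- The per-`γ` spanning condition. -/
def PerG (T : SimpleGraph (Dmin A)) : Prop :=
  ∀ (γ u v : Dmin A), (Hgam γ).Reachable u v → (T ⊓ Hgam γ).Reachable u v

lemma perG_of_lc {T : SimpleGraph (Dmin A)} (hlc : LocallyConnected T) : PerG T := by
  intro γ u v h
  obtain ⟨p⟩ := h
  induction p with
  | nil => exact Reachable.refl _
  | @cons a w c h p ih =>
    refine Reachable.trans ?_ ih
    obtain ⟨hne, α, h1, h2, h3⟩ := h
    have hr : (T.induce {β : Dmin A | β.1 ≤ α}).Reachable ⟨a, h1⟩ ⟨w, h2⟩ :=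
      (hlc α).preconnected _ _
    have hmapped := hr.map
      (⟨Subtype.val, by
        rintro ⟨x, hx⟩ ⟨y, hy⟩ hxy
        have hxy' : T.Adj x y := hxy
        exact ⟨hxy', hxy'.ne, α, hx, hy, h3⟩⟩ :
        T.induce {β : Dmin A | β.1 ≤ α} →g (T ⊓ Hgam γ))
    exact hmapped

lemma lc_of_perG {T : SimpleGraph (Dmin A)} (ht : T.IsTree) (hpg : PerG T) :
    LocallyConnected T := by
  intro α
  rw [connected_iff]
  constructor
  · rintro ⟨u, hu⟩ ⟨v, hv⟩
    by_cases huv : u = v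
    · subst huv; exact Reachable.refl _
    · obtain ⟨p, hp, huniq⟩ := ht.existsUnique_path u v
      have hsupp : ∀ z ∈ p.support, z ∈ {β : Dmin A | β.1 ≤ α} := by
        intro z hz
        by_contra hzα
        have hadj : (Hgam z).Adj u v := ⟨huv, α, hu, hv, hzα⟩
        obtain ⟨q⟩ := hpg z u v hadj.reachable
        have hq'p : (q.mapLe (inf_le_left : T ⊓ Hgam z ≤ T)).bypass = p :=
          huniq _ (Walk.bypass_isPath _)
        have hz' : z ∈ (q.mapLe (inf_le_left : T ⊓ Hgam z ≤ T)).support := by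
          rw [← hq'p] at hz
          exact Walk.support_bypass_subset _ hz
        have hzq : z ∈ q.support := by
          simpa [Walk.support_map] using hz'
        have hiso : ∀ y', ¬ (T ⊓ Hgam z).Adj y' z := by
          rintro y' ⟨-, -, α', h1, h2, h3⟩
          exact h3 h2
        have hzu := eq_start_of_isolated hiso q hzq
        subst hzu
        exact hzα hu
      exact reachable_induce_of_walk p hsupp hu hv
  · obtain ⟨β₀, hβ₀, hmin⟩ := exists_minimal_le_of_wellFoundedLT (P := fun _ : A => True) (a := α) trivial
    exact ⟨⟨⟨β₀, fun c hc => hmin.2 trivial hc⟩, hβ₀⟩⟩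

/-- edges of `T` forcing `γ`. -/
noncomputable def mgam (T : SimpleGraph (Dmin A)) (γ : Dmin A) : ℕ :=
  (Finset.univ.filter (fun e : Sym2 (Dmin A) => e ∈ T.edgeSet ∧
    ∀ α : A, (∀ β ∈ e, (β : Dmin A).1 ≤ α) → γ.1 ≤ α)).card

lemma weight_eq (T : SimpleGraph (Dmin A)) : weightA T = ∑ γ : Dmin A, mgam T γ := by
  have hstep : ∀ e : Sym2 (Dmin A), (if e ∈ T.edgeSet then edgeLength e else 0) =
      ∑ γ : Dmin A, if e ∈ T.edgeSet ∧
        (∀ α : A, (∀ β ∈ e, (β : Dmin A).1 ≤ α) → γ.1 ≤ α) then 1 else 0 := by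
    intro e
    by_cases he : e ∈ T.edgeSet
    · simp only [he, if_true, true_and]
      rw [edgeLength, Nat.card_eq_fintype_card, Fintype.card_subtype, Finset.card_filter]
    · simp [he]
  rw [weightA]
  rw [Finset.sum_congr rfl (fun e _ => hstep e), Finset.sum_comm]
  refine Finset.sum_congr rfl (fun γ _ => ?_)
  rw [mgam, Finset.card_filter]

lemma forces_iff {T : SimpleGraph (Dmin A)} {γ : Dmin A} {e : Sym2 (Dmin A)}
    (he : e ∈ T.edgeSet) :
    (∀ α : A, (∀ β ∈ e, (β : Dmin A).1 ≤ α) → γ.1 ≤ α) ↔ e ∉ (Hgam γ).edgeSet := by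
  induction e using Sym2.ind with
  | _ u v =>
    have hne : u ≠ v := (T.mem_edgeSet.mp he).ne
    rw [mem_edgeSet]
    constructor
    · rintro hf ⟨-, α, h1, h2, h3⟩
      exact h3 (hf α (fun β hβ => by rcases Sym2.mem_iff.mp hβ with rfl | rfl <;> assumption))
    · intro hna α hβ
      by_contra hγ
      exact hna ⟨hne, α, hβ u (by simp), hβ v (by simp), hγ⟩

lemma mgam_add (T : SimpleGraph (Dmin A)) (γ : Dmin A) :
    mgam T γ + Nat.card (T ⊓ Hgam γ).edgeSet = Nat.card T.edgeSet := by
  have h1 : Nat.card (T ⊓ Hgam γ).edgeSet =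
      (Finset.univ.filter (fun e : Sym2 (Dmin A) =>
        e ∈ T.edgeSet ∧ e ∈ (Hgam γ).edgeSet)).card := by
    rw [Nat.card_eq_fintype_card, ← Set.toFinset_card]
    congr 1
    ext e
    simp [Set.mem_toFinset, edgeSet_inf]
  have h2 : Nat.card T.edgeSet =
      (Finset.univ.filter (fun e : Sym2 (Dmin A) => e ∈ T.edgeSet)).card := by
    rw [Nat.card_eq_fintype_card, ← Set.toFinset_card]
    congr 1
    ext e
    simp [Set.mem_toFinset]
  rw [mgam, h1, h2, ← Finset.card_union_of_disjoint, ← Finset.filter_or]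
  · congr 1
    ext e
    simp only [Finset.mem_filter, Finset.mem_univ, true_and]
    constructor
    · rintro (⟨he, -⟩ | ⟨he, -⟩) <;> exact he
    · intro he
      by_cases hH : e ∈ (Hgam γ).edgeSet
      · exact Or.inr ⟨he, hH⟩
      · exact Or.inl ⟨he, (forces_iff he).mpr hH⟩
  · rw [Finset.disjoint_filter]
    rintro e - ⟨he, hf⟩ ⟨-, hH⟩
    exact (forces_iff he).mp hf hH

lemma sub_acyclic {T G : SimpleGraph (Dmin A)} (ht : T.IsAcyclic) (hle : G ≤ T) :
    G.IsAcyclic := by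
  intro v c hc
  exact ht (c.mapLe hle) ((Walk.mapLe_isCycle hle).mpr hc)

lemma mgam_le {T T' : SimpleGraph (Dmin A)} (hT : T.IsTree) (hT' : T'.IsTree)
    (hpg : PerG T) (γ : Dmin A) :
    mgam T γ ≤ mgam T' γ ∧
      ((∃ u v : Dmin A, (Hgam γ).Reachable u v ∧ ¬(T' ⊓ Hgam γ).Reachable u v) →
        mgam T γ < mgam T' γ) := by
  have hcmp := forest_compare (inf_le_right : T' ⊓ Hgam γ ≤ Hgam γ)
    (inf_le_right : T ⊓ Hgam γ ≤ Hgam γ)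
    (sub_acyclic hT'.2 inf_le_left) (sub_acyclic hT.2 inf_le_left)
    (fun u v h => hpg γ u v h)
  have e1 := mgam_add T γ
  have e2 := mgam_add T' γ
  have n1 := hT.nat_card_edgeSet
  have n2 := hT'.nat_card_edgeSet
  exact ⟨by omega, fun hw => by have := hcmp.2 hw; omega⟩

end Poset

/-- Corollary 4.5: if `A` is synchronizable for Class `W⋆`, then a spanning tree of the
graph of interlaced relation is locally connected iff it has minimum weight. -/
theorem stmt_10 {A : Type*} [Fintype A] [PartialOrder A]
    (hsync : ∃ T : SimpleGraph (Dmin A),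
      T ≤ interlaced A ∧ T.IsTree ∧ LocallyConnected T)
    (T : SimpleGraph (Dmin A)) (hT : T ≤ interlaced A ∧ T.IsTree) :
    LocallyConnected T ↔
      ∀ T' : SimpleGraph (Dmin A), T' ≤ interlaced A → T'.IsTree →
        weightA T ≤ weightA T' := by
  obtain ⟨T₀, hT₀le, hT₀tree, hT₀lc⟩ := hsync
  obtain ⟨hTle, hTtree⟩ := hT
  constructor
  · intro hlc T' _ hT'tree
    rw [weight_eq, weight_eq]
    exact Finset.sum_le_sum fun γ _ =>
      (mgam_le hTtree hT'tree (perG_of_lc hlc) γ).1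
  · intro hmin
    by_contra hnlc
    have hnpg : ¬ PerG T := fun hpg => hnlc (lc_of_perG hTtree hpg)
    have hlt : weightA T₀ < weightA T := by
      rw [weight_eq, weight_eq]
      obtain ⟨γ, u, v, hr, hnr⟩ := by
        simpa only [PerG, not_forall] using hnpg
      refine Finset.sum_lt_sum
        (fun γ' _ => (mgam_le hT₀tree hTtree (perG_of_lc hT₀lc) γ').1) ?_
      exact ⟨γ, Finset.mem_univ γ,
        (mgam_le hT₀tree hTtree (perG_of_lc hT₀lc) γ).2 ⟨u, v, hr, hnr⟩⟩
    have := hmin T₀ hT₀le hT₀tree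
    omega
end GeneralGraph
end

section
/- Let A be the 8-element poset that is the standard example of a 4-dimensional poset: minimal elements b₁, b₁*, b₂*, b₀ and maximal elements a₀, a₁⁽¹⁾, a₁⁽²⁾, a₂, where each minimal element is below every maximal element except its 'partner' (b₁ ↛ a₀, b₁* ↛ a₁⁽¹⁾, b₂* ↛ a₁⁽²⁾, b₀ ↛ a₂). Then A is not synchronizable for Class W_⋆: no spanning tree of the graph of interlaced relation on the four minimal elements is locally connected. -/
open SimpleGraph

section Aux
variable {V : Type*} {G : SimpleGraph V}

lemma aux_no_triangle (hG : G.IsAcyclic) {u v w : V}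
    (h1 : G.Adj u v) (h2 : G.Adj v w) (h3 : G.Adj u w) : False := by
  have hpu := isAcyclic_iff_path_unique.mp hG
  have hp : (Walk.cons h1 (Walk.cons h2 Walk.nil)).IsPath := by
    simp [Walk.isPath_def, h1.ne, h2.ne, h3.ne]
  have heq := hpu ⟨_, hp⟩ (Path.singleton h3)
  have := congrArg (fun p => p.1.length) heq
  simp [Path.singleton] at this

lemma aux_no_square (hG : G.IsAcyclic) {u v w x : V} (hvx : v ≠ x) (huw : u ≠ w)
    (h1 : G.Adj u v) (h2 : G.Adj v w) (h3 : G.Adj u x) (h4 : G.Adj x w) : False := by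
  have hpu := isAcyclic_iff_path_unique.mp hG
  have hp : (Walk.cons h1 (Walk.cons h2 Walk.nil)).IsPath := by
    simp [Walk.isPath_def, h1.ne, h2.ne, huw]
  have hq : (Walk.cons h3 (Walk.cons h4 Walk.nil)).IsPath := by
    simp [Walk.isPath_def, h3.ne, h4.ne, huw]
  have heq := hpu ⟨_, hp⟩ ⟨_, hq⟩
  have := congrArg (fun p => p.1.support) heq
  simp at this
  exact hvx this

lemma aux_exists_adj {S : Set V} (h : (G.induce S).Connected)
    {x y : V} (hx : x ∈ S) (hy : y ∈ S) (hxy : x ≠ y) :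
    ∃ z ∈ S, G.Adj x z := by
  obtain ⟨w⟩ := h.1 ⟨x, hx⟩ ⟨y, hy⟩
  have hnn : ¬ w.Nil := Walk.not_nil_of_ne (fun h => hxy (congrArg Subtype.val h))
  have hadj := SimpleGraph.Walk.adj_snd hnn
  exact ⟨(w.getVert 1).1, (w.getVert 1).2, hadj⟩

lemma aux_comb (e01 e02 e03 e12 e13 e23 : Prop)
    (c1 : e12 ∨ e13) (c2 : e12 ∨ e23) (c3 : e13 ∨ e23)
    (c4 : e02 ∨ e03) (c5 : e02 ∨ e23) (c6 : e03 ∨ e23)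
    (c7 : e01 ∨ e03) (c8 : e01 ∨ e13) (c9 : e03 ∨ e13)
    (c10 : e01 ∨ e02) (c11 : e01 ∨ e12) (c12 : e02 ∨ e12) :
    (e01 ∧ e02 ∧ e12) ∨ (e01 ∧ e03 ∧ e13) ∨ (e02 ∧ e03 ∧ e23) ∨ (e12 ∧ e13 ∧ e23) ∨
    (e01 ∧ e12 ∧ e23 ∧ e03) ∨ (e01 ∧ e13 ∧ e23 ∧ e02) ∨ (e02 ∧ e12 ∧ e13 ∧ e03) := by
  by_cases h03 : e03
  · by_cases h12 : e12
    · rcases c8 with h01 | h13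
      · rcases c5 with h02 | h23
        · exact Or.inl ⟨h01, h02, h12⟩
        · exact Or.inr (Or.inr (Or.inr (Or.inr (Or.inl ⟨h01, h12, h23, h03⟩))))
      · rcases c5 with h02 | h23
        · exact Or.inr (Or.inr (Or.inr (Or.inr (Or.inr (Or.inr ⟨h02, h12, h13, h03⟩)))))
        · exact Or.inr (Or.inr (Or.inr (Or.inl ⟨h12, h13, h23⟩)))
    · have h13 := c1.resolve_left h12
      exact Or.inr (Or.inl ⟨c11.resolve_right h12, h03, h13⟩)
  · exact Or.inr (Or.inr (Or.inr (Or.inr (Or.inr (Or.inl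
      ⟨c7.resolve_right h03, c9.resolve_left h03, c6.resolve_left h03, c4.resolve_right h03⟩)))))

end Aux


/-- The standard example of a 4-dimensional poset (minimal elements `b₁, b₁*, b₂*, b₀`
and maximal elements `a₀, a₁⁽¹⁾, a₁⁽²⁾, a₂`, each minimal below every maximal except
its partner) is not synchronizable for Class `W⋆`: no spanning tree of the graph of
interlaced relation is locally connected. -/
theorem stmt_12 {A : Type*} [Fintype A] [PartialOrder A]
    (b1 b1s b2s b0 a0 a11 a12 a2 : A)
    (hnd : [b1, b1s, b2s, b0, a0, a11, a12, a2].Nodup)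
    (hall : ∀ x : A, x ∈ [b1, b1s, b2s, b0, a0, a11, a12, a2])
    (hle : ∀ x y : A, x ≤ y ↔ x = y ∨
      ((x = b1 ∨ x = b1s ∨ x = b2s ∨ x = b0) ∧ (y = a0 ∨ y = a11 ∨ y = a12 ∨ y = a2) ∧
        ¬(x = b1 ∧ y = a0) ∧ ¬(x = b1s ∧ y = a11) ∧
        ¬(x = b2s ∧ y = a12) ∧ ¬(x = b0 ∧ y = a2))) :
    ¬ ∃ T : SimpleGraph (Dmin A), T ≤ interlaced A ∧ T.IsTree ∧ LocallyConnected T := by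
  rintro ⟨T, hTle, hT, hLC⟩
  simp only [List.nodup_cons, List.mem_cons, List.mem_singleton, List.not_mem_nil,
    or_false, not_or, List.nodup_nil, and_true] at hnd
  obtain ⟨⟨n12, n13, n14, n15, n16, n17, n18⟩, ⟨n23, n24, n25, n26, n27, n28⟩, ⟨n34, n35, n36, n37, n38⟩, ⟨n45, n46, n47, n48⟩, ⟨n56, n57, n58⟩, ⟨n67, n68⟩, n78, -⟩ := hnd
  have n21 : b1s ≠ b1 := fun h => n12 h.symm
  have n31 : b2s ≠ b1 := fun h => n13 h.symm
  have n32 : b2s ≠ b1s := fun h => n23 h.symm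
  have n41 : b0 ≠ b1 := fun h => n14 h.symm
  have n42 : b0 ≠ b1s := fun h => n24 h.symm
  have n43 : b0 ≠ b2s := fun h => n34 h.symm
  have n51 : a0 ≠ b1 := fun h => n15 h.symm
  have n52 : a0 ≠ b1s := fun h => n25 h.symm
  have n53 : a0 ≠ b2s := fun h => n35 h.symm
  have n54 : a0 ≠ b0 := fun h => n45 h.symm
  have n61 : a11 ≠ b1 := fun h => n16 h.symm
  have n62 : a11 ≠ b1s := fun h => n26 h.symm
  have n63 : a11 ≠ b2s := fun h => n36 h.symm
  have n64 : a11 ≠ b0 := fun h => n46 h.symm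
  have n65 : a11 ≠ a0 := fun h => n56 h.symm
  have n71 : a12 ≠ b1 := fun h => n17 h.symm
  have n72 : a12 ≠ b1s := fun h => n27 h.symm
  have n73 : a12 ≠ b2s := fun h => n37 h.symm
  have n74 : a12 ≠ b0 := fun h => n47 h.symm
  have n75 : a12 ≠ a0 := fun h => n57 h.symm
  have n76 : a12 ≠ a11 := fun h => n67 h.symm
  have n81 : a2 ≠ b1 := fun h => n18 h.symm
  have n82 : a2 ≠ b1s := fun h => n28 h.symm
  have n83 : a2 ≠ b2s := fun h => n38 h.symm
  have n84 : a2 ≠ b0 := fun h => n48 h.symm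
  have n85 : a2 ≠ a0 := fun h => n58 h.symm
  have n86 : a2 ≠ a11 := fun h => n68 h.symm
  have n87 : a2 ≠ a12 := fun h => n78 h.symm
  have hmin : ∀ x : A, x = b1 ∨ x = b1s ∨ x = b2s ∨ x = b0 → IsMin x := by
    intro x hx y hyx
    rcases (hle y x).1 hyx with rfl | ⟨-, hy2, -⟩
    · exact le_rfl
    · exfalso
      rcases hx with rfl | rfl | rfl | rfl <;> rcases hy2 with h | h | h | h <;> simp_all
  have l16 : b1 ≤ a11 := (hle _ _).2 (Or.inr ⟨Or.inl rfl, Or.inr (Or.inl rfl), fun h => n65 h.2, fun h => n12 h.1, fun h => n13 h.1, fun h => n14 h.1⟩)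
  have l17 : b1 ≤ a12 := (hle _ _).2 (Or.inr ⟨Or.inl rfl, Or.inr (Or.inr (Or.inl rfl)), fun h => n75 h.2, fun h => n12 h.1, fun h => n13 h.1, fun h => n14 h.1⟩)
  have l18 : b1 ≤ a2 := (hle _ _).2 (Or.inr ⟨Or.inl rfl, Or.inr (Or.inr (Or.inr rfl)), fun h => n85 h.2, fun h => n12 h.1, fun h => n13 h.1, fun h => n14 h.1⟩)
  have l25 : b1s ≤ a0 := (hle _ _).2 (Or.inr ⟨Or.inr (Or.inl rfl), Or.inl rfl, fun h => n21 h.1, fun h => n56 h.2, fun h => n23 h.1, fun h => n24 h.1⟩)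
  have l27 : b1s ≤ a12 := (hle _ _).2 (Or.inr ⟨Or.inr (Or.inl rfl), Or.inr (Or.inr (Or.inl rfl)), fun h => n21 h.1, fun h => n76 h.2, fun h => n23 h.1, fun h => n24 h.1⟩)
  have l28 : b1s ≤ a2 := (hle _ _).2 (Or.inr ⟨Or.inr (Or.inl rfl), Or.inr (Or.inr (Or.inr rfl)), fun h => n21 h.1, fun h => n86 h.2, fun h => n23 h.1, fun h => n24 h.1⟩)
  have l35 : b2s ≤ a0 := (hle _ _).2 (Or.inr ⟨Or.inr (Or.inr (Or.inl rfl)), Or.inl rfl, fun h => n31 h.1, fun h => n32 h.1, fun h => n57 h.2, fun h => n34 h.1⟩)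
  have l36 : b2s ≤ a11 := (hle _ _).2 (Or.inr ⟨Or.inr (Or.inr (Or.inl rfl)), Or.inr (Or.inl rfl), fun h => n31 h.1, fun h => n32 h.1, fun h => n67 h.2, fun h => n34 h.1⟩)
  have l38 : b2s ≤ a2 := (hle _ _).2 (Or.inr ⟨Or.inr (Or.inr (Or.inl rfl)), Or.inr (Or.inr (Or.inr rfl)), fun h => n31 h.1, fun h => n32 h.1, fun h => n87 h.2, fun h => n34 h.1⟩)
  have l45 : b0 ≤ a0 := (hle _ _).2 (Or.inr ⟨Or.inr (Or.inr (Or.inr rfl)), Or.inl rfl, fun h => n41 h.1, fun h => n42 h.1, fun h => n43 h.1, fun h => n58 h.2⟩)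
  have l46 : b0 ≤ a11 := (hle _ _).2 (Or.inr ⟨Or.inr (Or.inr (Or.inr rfl)), Or.inr (Or.inl rfl), fun h => n41 h.1, fun h => n42 h.1, fun h => n43 h.1, fun h => n68 h.2⟩)
  have l47 : b0 ≤ a12 := (hle _ _).2 (Or.inr ⟨Or.inr (Or.inr (Or.inr rfl)), Or.inr (Or.inr (Or.inl rfl)), fun h => n41 h.1, fun h => n42 h.1, fun h => n43 h.1, fun h => n78 h.2⟩)
  have nlp1 : ¬ b1 ≤ a0 := fun h => by
    rcases (hle _ _).1 h with h' | ⟨-, -, c, -, -, -⟩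
    exacts [n15 h', c ⟨rfl, rfl⟩]
  have nlp2 : ¬ b1s ≤ a11 := fun h => by
    rcases (hle _ _).1 h with h' | ⟨-, -, -, c, -, -⟩
    exacts [n26 h', c ⟨rfl, rfl⟩]
  have nlp3 : ¬ b2s ≤ a12 := fun h => by
    rcases (hle _ _).1 h with h' | ⟨-, -, -, -, c, -⟩
    exacts [n37 h', c ⟨rfl, rfl⟩]
  have nlp4 : ¬ b0 ≤ a2 := fun h => by
    rcases (hle _ _).1 h with h' | ⟨-, -, -, -, -, c⟩
    exacts [n48 h', c ⟨rfl, rfl⟩]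
  have na5 : ¬ a0 ≤ b1s := fun h => by
    rcases (hle _ _).1 h with h' | ⟨h'' | h'' | h'' | h'', -, -⟩
    exacts [n52 h', n51 h'', n52 h'', n53 h'', n54 h'']
  have na6 : ¬ a11 ≤ b1 := fun h => by
    rcases (hle _ _).1 h with h' | ⟨h'' | h'' | h'' | h'', -, -⟩
    exacts [n61 h', n61 h'', n62 h'', n63 h'', n64 h'']
  have na7 : ¬ a12 ≤ b1 := fun h => by
    rcases (hle _ _).1 h with h' | ⟨h'' | h'' | h'' | h'', -, -⟩
    exacts [n71 h', n71 h'', n72 h'', n73 h'', n74 h'']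
  have na8 : ¬ a2 ≤ b1 := fun h => by
    rcases (hle _ _).1 h with h' | ⟨h'' | h'' | h'' | h'', -, -⟩
    exacts [n81 h', n81 h'', n82 h'', n83 h'', n84 h'']
  have nm5 : ¬ IsMin a0 := fun hm => na5 (hm l25)
  have nm6 : ¬ IsMin a11 := fun hm => na6 (hm l16)
  have nm7 : ¬ IsMin a12 := fun hm => na7 (hm l17)
  have nm8 : ¬ IsMin a2 := fun hm => na8 (hm l18)
  have m1 : IsMin b1 := hmin _ (Or.inl rfl)
  have m2 : IsMin b1s := hmin _ (Or.inr (Or.inl rfl))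
  have m3 : IsMin b2s := hmin _ (Or.inr (Or.inr (Or.inl rfl)))
  have m4 : IsMin b0 := hmin _ (Or.inr (Or.inr (Or.inr rfl)))
  have wne12 : (⟨b1, m1⟩ : Dmin A) ≠ (⟨b1s, m2⟩ : Dmin A) := fun h => n12 (congrArg Subtype.val h)
  have wne13 : (⟨b1, m1⟩ : Dmin A) ≠ (⟨b2s, m3⟩ : Dmin A) := fun h => n13 (congrArg Subtype.val h)
  have wne14 : (⟨b1, m1⟩ : Dmin A) ≠ (⟨b0, m4⟩ : Dmin A) := fun h => n14 (congrArg Subtype.val h)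
  have wne23 : (⟨b1s, m2⟩ : Dmin A) ≠ (⟨b2s, m3⟩ : Dmin A) := fun h => n23 (congrArg Subtype.val h)
  have wne24 : (⟨b1s, m2⟩ : Dmin A) ≠ (⟨b0, m4⟩ : Dmin A) := fun h => n24 (congrArg Subtype.val h)
  have wne34 : (⟨b2s, m3⟩ : Dmin A) ≠ (⟨b0, m4⟩ : Dmin A) := fun h => n34 (congrArg Subtype.val h)
  have hcls5 : ∀ z : Dmin A, z.1 ≤ a0 → z = (⟨b1s, m2⟩ : Dmin A) ∨ z = (⟨b2s, m3⟩ : Dmin A) ∨ z = (⟨b0, m4⟩ : Dmin A) := by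
    intro z hz
    have hm := hall z.1
    simp only [List.mem_cons, List.not_mem_nil, or_false] at hm
    rcases hm with h | h | h | h | h | h | h | h
    · rw [h] at hz; exact absurd hz nlp1
    · exact Or.inl (Subtype.ext h)
    · exact Or.inr (Or.inl (Subtype.ext h))
    · exact Or.inr (Or.inr (Subtype.ext h))
    · have hzm := z.2; rw [h] at hzm; exact absurd hzm nm5
    · have hzm := z.2; rw [h] at hzm; exact absurd hzm nm6
    · have hzm := z.2; rw [h] at hzm; exact absurd hzm nm7
    · have hzm := z.2; rw [h] at hzm; exact absurd hzm nm8
  have hcls6 : ∀ z : Dmin A, z.1 ≤ a11 → z = (⟨b1, m1⟩ : Dmin A) ∨ z = (⟨b2s, m3⟩ : Dmin A) ∨ z = (⟨b0, m4⟩ : Dmin A) := by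
    intro z hz
    have hm := hall z.1
    simp only [List.mem_cons, List.not_mem_nil, or_false] at hm
    rcases hm with h | h | h | h | h | h | h | h
    · exact Or.inl (Subtype.ext h)
    · rw [h] at hz; exact absurd hz nlp2
    · exact Or.inr (Or.inl (Subtype.ext h))
    · exact Or.inr (Or.inr (Subtype.ext h))
    · have hzm := z.2; rw [h] at hzm; exact absurd hzm nm5
    · have hzm := z.2; rw [h] at hzm; exact absurd hzm nm6
    · have hzm := z.2; rw [h] at hzm; exact absurd hzm nm7
    · have hzm := z.2; rw [h] at hzm; exact absurd hzm nm8
  have hcls7 : ∀ z : Dmin A, z.1 ≤ a12 → z = (⟨b1, m1⟩ : Dmin A) ∨ z = (⟨b1s, m2⟩ : Dmin A) ∨ z = (⟨b0, m4⟩ : Dmin A) := by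
    intro z hz
    have hm := hall z.1
    simp only [List.mem_cons, List.not_mem_nil, or_false] at hm
    rcases hm with h | h | h | h | h | h | h | h
    · exact Or.inl (Subtype.ext h)
    · exact Or.inr (Or.inl (Subtype.ext h))
    · rw [h] at hz; exact absurd hz nlp3
    · exact Or.inr (Or.inr (Subtype.ext h))
    · have hzm := z.2; rw [h] at hzm; exact absurd hzm nm5
    · have hzm := z.2; rw [h] at hzm; exact absurd hzm nm6
    · have hzm := z.2; rw [h] at hzm; exact absurd hzm nm7
    · have hzm := z.2; rw [h] at hzm; exact absurd hzm nm8
  have hcls8 : ∀ z : Dmin A, z.1 ≤ a2 → z = (⟨b1, m1⟩ : Dmin A) ∨ z = (⟨b1s, m2⟩ : Dmin A) ∨ z = (⟨b2s, m3⟩ : Dmin A) := by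
    intro z hz
    have hm := hall z.1
    simp only [List.mem_cons, List.not_mem_nil, or_false] at hm
    rcases hm with h | h | h | h | h | h | h | h
    · exact Or.inl (Subtype.ext h)
    · exact Or.inr (Or.inl (Subtype.ext h))
    · exact Or.inr (Or.inr (Subtype.ext h))
    · rw [h] at hz; exact absurd hz nlp4
    · have hzm := z.2; rw [h] at hzm; exact absurd hzm nm5
    · have hzm := z.2; rw [h] at hzm; exact absurd hzm nm6
    · have hzm := z.2; rw [h] at hzm; exact absurd hzm nm7
    · have hzm := z.2; rw [h] at hzm; exact absurd hzm nm8
  have c5_2 : T.Adj (⟨b1s, m2⟩ : Dmin A) (⟨b2s, m3⟩ : Dmin A) ∨ T.Adj (⟨b1s, m2⟩ : Dmin A) (⟨b0, m4⟩ : Dmin A) := by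
    obtain ⟨z, hzS, hadj⟩ := aux_exists_adj (hLC a0) (x := (⟨b1s, m2⟩ : Dmin A)) (y := (⟨b2s, m3⟩ : Dmin A)) l25 l35 (wne23)
    rcases hcls5 z hzS with rfl | rfl | rfl
    · exact absurd hadj (T.loopless.irrefl _)
    · exact Or.inl hadj
    · exact Or.inr hadj
  have c5_3 : T.Adj (⟨b1s, m2⟩ : Dmin A) (⟨b2s, m3⟩ : Dmin A) ∨ T.Adj (⟨b2s, m3⟩ : Dmin A) (⟨b0, m4⟩ : Dmin A) := by
    obtain ⟨z, hzS, hadj⟩ := aux_exists_adj (hLC a0) (x := (⟨b2s, m3⟩ : Dmin A)) (y := (⟨b1s, m2⟩ : Dmin A)) l35 l25 (wne23.symm)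
    rcases hcls5 z hzS with rfl | rfl | rfl
    · exact Or.inl hadj.symm
    · exact absurd hadj (T.loopless.irrefl _)
    · exact Or.inr hadj
  have c5_4 : T.Adj (⟨b1s, m2⟩ : Dmin A) (⟨b0, m4⟩ : Dmin A) ∨ T.Adj (⟨b2s, m3⟩ : Dmin A) (⟨b0, m4⟩ : Dmin A) := by
    obtain ⟨z, hzS, hadj⟩ := aux_exists_adj (hLC a0) (x := (⟨b0, m4⟩ : Dmin A)) (y := (⟨b1s, m2⟩ : Dmin A)) l45 l25 (wne24.symm)
    rcases hcls5 z hzS with rfl | rfl | rfl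
    · exact Or.inl hadj.symm
    · exact Or.inr hadj.symm
    · exact absurd hadj (T.loopless.irrefl _)
  have c6_1 : T.Adj (⟨b1, m1⟩ : Dmin A) (⟨b2s, m3⟩ : Dmin A) ∨ T.Adj (⟨b1, m1⟩ : Dmin A) (⟨b0, m4⟩ : Dmin A) := by
    obtain ⟨z, hzS, hadj⟩ := aux_exists_adj (hLC a11) (x := (⟨b1, m1⟩ : Dmin A)) (y := (⟨b2s, m3⟩ : Dmin A)) l16 l36 (wne13)
    rcases hcls6 z hzS with rfl | rfl | rfl
    · exact absurd hadj (T.loopless.irrefl _)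
    · exact Or.inl hadj
    · exact Or.inr hadj
  have c6_3 : T.Adj (⟨b1, m1⟩ : Dmin A) (⟨b2s, m3⟩ : Dmin A) ∨ T.Adj (⟨b2s, m3⟩ : Dmin A) (⟨b0, m4⟩ : Dmin A) := by
    obtain ⟨z, hzS, hadj⟩ := aux_exists_adj (hLC a11) (x := (⟨b2s, m3⟩ : Dmin A)) (y := (⟨b1, m1⟩ : Dmin A)) l36 l16 (wne13.symm)
    rcases hcls6 z hzS with rfl | rfl | rfl
    · exact Or.inl hadj.symm
    · exact absurd hadj (T.loopless.irrefl _)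
    · exact Or.inr hadj
  have c6_4 : T.Adj (⟨b1, m1⟩ : Dmin A) (⟨b0, m4⟩ : Dmin A) ∨ T.Adj (⟨b2s, m3⟩ : Dmin A) (⟨b0, m4⟩ : Dmin A) := by
    obtain ⟨z, hzS, hadj⟩ := aux_exists_adj (hLC a11) (x := (⟨b0, m4⟩ : Dmin A)) (y := (⟨b1, m1⟩ : Dmin A)) l46 l16 (wne14.symm)
    rcases hcls6 z hzS with rfl | rfl | rfl
    · exact Or.inl hadj.symm
    · exact Or.inr hadj.symm
    · exact absurd hadj (T.loopless.irrefl _)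
  have c7_1 : T.Adj (⟨b1, m1⟩ : Dmin A) (⟨b1s, m2⟩ : Dmin A) ∨ T.Adj (⟨b1, m1⟩ : Dmin A) (⟨b0, m4⟩ : Dmin A) := by
    obtain ⟨z, hzS, hadj⟩ := aux_exists_adj (hLC a12) (x := (⟨b1, m1⟩ : Dmin A)) (y := (⟨b1s, m2⟩ : Dmin A)) l17 l27 (wne12)
    rcases hcls7 z hzS with rfl | rfl | rfl
    · exact absurd hadj (T.loopless.irrefl _)
    · exact Or.inl hadj
    · exact Or.inr hadj
  have c7_2 : T.Adj (⟨b1, m1⟩ : Dmin A) (⟨b1s, m2⟩ : Dmin A) ∨ T.Adj (⟨b1s, m2⟩ : Dmin A) (⟨b0, m4⟩ : Dmin A) := by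
    obtain ⟨z, hzS, hadj⟩ := aux_exists_adj (hLC a12) (x := (⟨b1s, m2⟩ : Dmin A)) (y := (⟨b1, m1⟩ : Dmin A)) l27 l17 (wne12.symm)
    rcases hcls7 z hzS with rfl | rfl | rfl
    · exact Or.inl hadj.symm
    · exact absurd hadj (T.loopless.irrefl _)
    · exact Or.inr hadj
  have c7_4 : T.Adj (⟨b1, m1⟩ : Dmin A) (⟨b0, m4⟩ : Dmin A) ∨ T.Adj (⟨b1s, m2⟩ : Dmin A) (⟨b0, m4⟩ : Dmin A) := by
    obtain ⟨z, hzS, hadj⟩ := aux_exists_adj (hLC a12) (x := (⟨b0, m4⟩ : Dmin A)) (y := (⟨b1, m1⟩ : Dmin A)) l47 l17 (wne14.symm)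
    rcases hcls7 z hzS with rfl | rfl | rfl
    · exact Or.inl hadj.symm
    · exact Or.inr hadj.symm
    · exact absurd hadj (T.loopless.irrefl _)
  have c8_1 : T.Adj (⟨b1, m1⟩ : Dmin A) (⟨b1s, m2⟩ : Dmin A) ∨ T.Adj (⟨b1, m1⟩ : Dmin A) (⟨b2s, m3⟩ : Dmin A) := by
    obtain ⟨z, hzS, hadj⟩ := aux_exists_adj (hLC a2) (x := (⟨b1, m1⟩ : Dmin A)) (y := (⟨b1s, m2⟩ : Dmin A)) l18 l28 (wne12)
    rcases hcls8 z hzS with rfl | rfl | rfl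
    · exact absurd hadj (T.loopless.irrefl _)
    · exact Or.inl hadj
    · exact Or.inr hadj
  have c8_2 : T.Adj (⟨b1, m1⟩ : Dmin A) (⟨b1s, m2⟩ : Dmin A) ∨ T.Adj (⟨b1s, m2⟩ : Dmin A) (⟨b2s, m3⟩ : Dmin A) := by
    obtain ⟨z, hzS, hadj⟩ := aux_exists_adj (hLC a2) (x := (⟨b1s, m2⟩ : Dmin A)) (y := (⟨b1, m1⟩ : Dmin A)) l28 l18 (wne12.symm)
    rcases hcls8 z hzS with rfl | rfl | rfl
    · exact Or.inl hadj.symm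
    · exact absurd hadj (T.loopless.irrefl _)
    · exact Or.inr hadj
  have c8_3 : T.Adj (⟨b1, m1⟩ : Dmin A) (⟨b2s, m3⟩ : Dmin A) ∨ T.Adj (⟨b1s, m2⟩ : Dmin A) (⟨b2s, m3⟩ : Dmin A) := by
    obtain ⟨z, hzS, hadj⟩ := aux_exists_adj (hLC a2) (x := (⟨b2s, m3⟩ : Dmin A)) (y := (⟨b1, m1⟩ : Dmin A)) l38 l18 (wne13.symm)
    rcases hcls8 z hzS with rfl | rfl | rfl
    · exact Or.inl hadj.symm
    · exact Or.inr hadj.symm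
    · exact absurd hadj (T.loopless.irrefl _)
  have hac := hT.IsAcyclic
  rcases aux_comb (T.Adj (⟨b1, m1⟩ : Dmin A) (⟨b1s, m2⟩ : Dmin A)) (T.Adj (⟨b1, m1⟩ : Dmin A) (⟨b2s, m3⟩ : Dmin A)) (T.Adj (⟨b1, m1⟩ : Dmin A) (⟨b0, m4⟩ : Dmin A)) (T.Adj (⟨b1s, m2⟩ : Dmin A) (⟨b2s, m3⟩ : Dmin A)) (T.Adj (⟨b1s, m2⟩ : Dmin A) (⟨b0, m4⟩ : Dmin A)) (T.Adj (⟨b2s, m3⟩ : Dmin A) (⟨b0, m4⟩ : Dmin A)) c5_2 c5_3 c5_4 c6_1 c6_3 c6_4 c7_1 c7_2 c7_4 c8_1 c8_2 c8_3 with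
    ⟨h1, h2, h3⟩ | ⟨h1, h2, h3⟩ | ⟨h1, h2, h3⟩ | ⟨h1, h2, h3⟩ | ⟨h1, h2, h3, h4⟩ | ⟨h1, h2, h3, h4⟩ | ⟨h1, h2, h3, h4⟩
  · exact aux_no_triangle hac h1 h3 h2
  · exact aux_no_triangle hac h1 h3 h2
  · exact aux_no_triangle hac h1 h3 h2
  · exact aux_no_triangle hac h1 h3 h2
  · exact aux_no_square hac wne24 wne13 h1 h2 h4 h3.symm
  · exact aux_no_square hac wne14 wne23 h1.symm h4 h2 h3.symm
  · exact aux_no_square hac wne12 wne34 h1.symm h4 h2.symm h3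
end

section
/- Let S be the 4-legged W_⋆-poset with top element z covering four pairwise-incomparable minimal elements y₀, y₁, y₂, y_⋆, and let A be the standard example of a 4-dimensional poset with minimal elements b₁, b₁*, b₂*, b₀ and maximal elements a₀, a₁⁽¹⁾, a₁⁽²⁾, a₂ (each minimal below every maximal except its partner). Define probability measures: P_{a₀} = (1/3)δ_{y₀} + (2/3)δ_z, P_{b₀} = (1/3)(δ_{y₀}+δ_{y₁}+δ_{y₂}), P_{a₁⁽¹⁾} = (1/3)δ_{y₁} + (2/3)δ_z, P_{a₁⁽²⁾} = (1/3)δ_{y₂} + (2/3)δ_z, P_{b₁} = (1/3)(δ_{y_⋆}+δ_{y₁}+δ_{y₂}), P_{a₂} = (1/3)δ_{y_⋆} + (2/3)δ_z, P_{b₁*} = (1/3)(δ_{y_⋆}+δ_{y₀}+δ_{y₂}), P_{b₂*} = (1/3)(δ_{y_⋆}+δ_{y₀}+δ_{y₁}). Then this system is stochastically monotone. -/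
/-- The point mass `δ_x` as a probability vector. -/
def pmass {S : Type*} [DecidableEq S] (x s : S) : ℝ := if s = x then 1 else 0

set_option maxHeartbeats 2000000 in
/-- Lemma (Example in Section 4): on the 4-legged `W⋆`-poset `S` (top `z` over the
pairwise incomparable minimal elements `y₀, y₁, y₂, y⋆`), the explicit system of
probability distributions indexed by the standard example of a 4-dimensional poset `A`
is stochastically monotone. -/
theorem stmt_13 {S A : Type*} [Fintype S] [DecidableEq S] [PartialOrder S]
    [PartialOrder A]
    -- the poset S
    (z y0 y1 y2 ys : S)
    (hndS : [z, y0, y1, y2, ys].Nodup)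
    (hallS : ∀ x : S, x ∈ [z, y0, y1, y2, ys])
    (hleS : ∀ x y : S, x ≤ y ↔ x = y ∨ (x ≠ z ∧ y = z))
    -- the poset A
    (b1 b1s b2s b0 a0 a11 a12 a2 : A)
    (hndA : [b1, b1s, b2s, b0, a0, a11, a12, a2].Nodup)
    (hallA : ∀ x : A, x ∈ [b1, b1s, b2s, b0, a0, a11, a12, a2])
    (hleA : ∀ x y : A, x ≤ y ↔ x = y ∨
      ((x = b1 ∨ x = b1s ∨ x = b2s ∨ x = b0) ∧ (y = a0 ∨ y = a11 ∨ y = a12 ∨ y = a2) ∧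
        ¬(x = b1 ∧ y = a0) ∧ ¬(x = b1s ∧ y = a11) ∧
        ¬(x = b2s ∧ y = a12) ∧ ¬(x = b0 ∧ y = a2)))
    -- the system of probability distributions
    (P : A → S → ℝ)
    (hPa0 : ∀ s, P a0 s = (1/3) * pmass y0 s + (2/3) * pmass z s)
    (hPb0 : ∀ s, P b0 s = (1/3) * (pmass y0 s + pmass y1 s + pmass y2 s))
    (hPa11 : ∀ s, P a11 s = (1/3) * pmass y1 s + (2/3) * pmass z s)
    (hPa12 : ∀ s, P a12 s = (1/3) * pmass y2 s + (2/3) * pmass z s)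
    (hPb1 : ∀ s, P b1 s = (1/3) * (pmass ys s + pmass y1 s + pmass y2 s))
    (hPa2 : ∀ s, P a2 s = (1/3) * pmass ys s + (2/3) * pmass z s)
    (hPb1s : ∀ s, P b1s s = (1/3) * (pmass ys s + pmass y0 s + pmass y2 s))
    (hPb2s : ∀ s, P b2s s = (1/3) * (pmass ys s + pmass y0 s + pmass y1 s)) :
    -- stochastic monotonicity
    ∀ α β : A, α ≤ β → ∀ U : Finset S, (∀ x ∈ U, ∀ y, x ≤ y → y ∈ U) →
      ∑ x ∈ U, P α x ≤ ∑ x ∈ U, P β x := by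

  intro α β hab U hU
  have hy0 : y0 ≠ z := fun h => by simp [h] at hndS
  have hy1 : y1 ≠ z := fun h => by simp [h] at hndS
  have hy2 : y2 ≠ z := fun h => by simp [h] at hndS
  have hys : ys ≠ z := fun h => by simp [h] at hndS
  have hsum : ∀ y : S, ∑ x ∈ U, pmass y x = if y ∈ U then (1:ℝ) else 0 := by
    intro y
    simp [pmass, Finset.sum_ite_eq']
  have hIle : ∀ y : S, y ≠ z →
      (if y ∈ U then (1:ℝ) else 0) ≤ (if z ∈ U then (1:ℝ) else 0) := by
    intro y hy
    have hz : y ∈ U → z ∈ U := fun hyU =>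
      hU y hyU z ((hleS y z).2 (Or.inr ⟨hy, rfl⟩))
    split_ifs with h1 h2
    · exact le_refl _
    · exact absurd (hz h1) h2
    · norm_num
    · exact le_refl _
  rcases (hleA α β).1 hab with rfl | ⟨hα, hβ, h1, h2, h3, h4⟩
  · exact le_refl _
  rcases hα with rfl | rfl | rfl | rfl <;> rcases hβ with rfl | rfl | rfl | rfl <;>
    first
    | tauto
    | (simp only [hPa0, hPb0, hPa11, hPa12, hPb1, hPa2, hPb1s, hPb2s,
        Finset.sum_add_distrib, ← Finset.mul_sum, hsum]
       linarith [hIle y0 hy0, hIle y1 hy1, hIle y2 hy2, hIle ys hys])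
end

section
/- With S the 4-legged W_⋆-poset (top z over incomparable y₀, y₁, y₂, y_⋆) and A the standard example of a 4-dimensional poset, the stochastically monotone system P_{a₀} = (1/3)δ_{y₀} + (2/3)δ_z, P_{b₀} = (1/3)(δ_{y₀}+δ_{y₁}+δ_{y₂}), P_{a₁⁽¹⁾} = (1/3)δ_{y₁} + (2/3)δ_z, P_{a₁⁽²⁾} = (1/3)δ_{y₂} + (2/3)δ_z, P_{b₁} = (1/3)(δ_{y_⋆}+δ_{y₁}+δ_{y₂}), P_{a₂} = (1/3)δ_{y_⋆} + (2/3)δ_z, P_{b₁*} = (1/3)(δ_{y_⋆}+δ_{y₀}+δ_{y₂}), P_{b₂*} = (1/3)(δ_{y_⋆}+δ_{y₀}+δ_{y₁}) is NOT realizably monotone: there is no family of S-valued random variables on a common probability space with these marginals satisfying X_α ≤ X_β whenever α ≤ β in A. -/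
open MeasureTheory

/-- Lemma (Example in Section 4): on the 4-legged `W⋆`-poset `S` (top `z` over the
pairwise incomparable minimal elements `y₀, y₁, y₂, y⋆`), the explicit stochastically
monotone system of probability distributions indexed by the standard example of a
4-dimensional poset `A` is NOT realizably monotone. -/
theorem stmt_14 {S A : Type*} [Fintype S] [DecidableEq S] [PartialOrder S]
    [PartialOrder A]
    -- the poset S
    (z y0 y1 y2 ys : S)
    (hndS : [z, y0, y1, y2, ys].Nodup)
    (hallS : ∀ x : S, x ∈ [z, y0, y1, y2, ys])
    (hleS : ∀ x y : S, x ≤ y ↔ x = y ∨ (x ≠ z ∧ y = z))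
    -- the poset A
    (b1 b1s b2s b0 a0 a11 a12 a2 : A)
    (hndA : [b1, b1s, b2s, b0, a0, a11, a12, a2].Nodup)
    (hallA : ∀ x : A, x ∈ [b1, b1s, b2s, b0, a0, a11, a12, a2])
    (hleA : ∀ x y : A, x ≤ y ↔ x = y ∨
      ((x = b1 ∨ x = b1s ∨ x = b2s ∨ x = b0) ∧ (y = a0 ∨ y = a11 ∨ y = a12 ∨ y = a2) ∧
        ¬(x = b1 ∧ y = a0) ∧ ¬(x = b1s ∧ y = a11) ∧
        ¬(x = b2s ∧ y = a12) ∧ ¬(x = b0 ∧ y = a2)))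
    -- the system of probability distributions
    (P : A → S → ℝ)
    (hPa0 : ∀ s, P a0 s = (1/3) * pmass y0 s + (2/3) * pmass z s)
    (hPb0 : ∀ s, P b0 s = (1/3) * (pmass y0 s + pmass y1 s + pmass y2 s))
    (hPa11 : ∀ s, P a11 s = (1/3) * pmass y1 s + (2/3) * pmass z s)
    (hPa12 : ∀ s, P a12 s = (1/3) * pmass y2 s + (2/3) * pmass z s)
    (hPb1 : ∀ s, P b1 s = (1/3) * (pmass ys s + pmass y1 s + pmass y2 s))
    (hPa2 : ∀ s, P a2 s = (1/3) * pmass ys s + (2/3) * pmass z s)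
    (hPb1s : ∀ s, P b1s s = (1/3) * (pmass ys s + pmass y0 s + pmass y2 s))
    (hPb2s : ∀ s, P b2s s = (1/3) * (pmass ys s + pmass y0 s + pmass y1 s)) :
    -- the system is not realizably monotone
    ¬ ∃ (Ω : Type) (_ : MeasurableSpace Ω) (μ : Measure Ω) (_ : IsProbabilityMeasure μ)
        (X : A → Ω → S),
        (∀ γ x, MeasurableSet {ω | X γ ω = x}) ∧
        (∀ γ x, μ {ω | X γ ω = x} = ENNReal.ofReal (P γ x)) ∧
        (∀ α β : A, α ≤ β → ∀ ω, X α ω ≤ X β ω) := by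

  rintro ⟨Ω, mΩ, μ, hprob, X, hmeas, hμ, hmono⟩
  -- distinctness
  simp only [List.nodup_cons, List.mem_cons, List.not_mem_nil, or_false, not_or,
    List.nodup_nil, and_true] at hndS hndA
  obtain ⟨⟨hzy0, hzy1, hzy2, hzys⟩, ⟨h01, h02, h0s⟩, ⟨h12, h1s⟩, h2s⟩ := hndS
  obtain ⟨⟨hA1, hA2, hA3, hA4, hA5, hA6, hA7⟩, ⟨hB1, hB2, hB3, hB4, hB5, hB6⟩,
    ⟨hC1, hC2, hC3, hC4, hC5⟩, ⟨hD1, hD2, hD3, hD4⟩, ⟨hE1, hE2, hE3⟩, ⟨hF1, hF2⟩, hG1⟩ := hndA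
  -- order facts in A
  have hle : ∀ b' a' : A, (b' = b1 ∨ b' = b1s ∨ b' = b2s ∨ b' = b0) →
      (a' = a0 ∨ a' = a11 ∨ a' = a12 ∨ a' = a2) → ¬(b' = b1 ∧ a' = a0) →
      ¬(b' = b1s ∧ a' = a11) → ¬(b' = b2s ∧ a' = a12) → ¬(b' = b0 ∧ a' = a2) →
      b' ≤ a' := fun b' a' h1 h2 h3 h4 h5 h6 => (hleA b' a').2 (Or.inr ⟨h1, h2, h3, h4, h5, h6⟩)
  have hb1a11 : b1 ≤ a11 := hle _ _ (Or.inl rfl) (Or.inr (Or.inl rfl))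
    (fun h => hE1 h.2.symm) (fun h => hA1 h.1) (fun h => hA2 h.1) (fun h => hA3 h.1)
  have hb1a12 : b1 ≤ a12 := hle _ _ (Or.inl rfl) (Or.inr (Or.inr (Or.inl rfl)))
    (fun h => hE2 h.2.symm) (fun h => hA1 h.1) (fun h => hA2 h.1) (fun h => hA3 h.1)
  have hb1a2 : b1 ≤ a2 := hle _ _ (Or.inl rfl) (Or.inr (Or.inr (Or.inr rfl)))
    (fun h => hE3 h.2.symm) (fun h => hA1 h.1) (fun h => hA2 h.1) (fun h => hA3 h.1)
  have hb1sa0 : b1s ≤ a0 := hle _ _ (Or.inr (Or.inl rfl)) (Or.inl rfl)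
    (fun h => hA1 h.1.symm) (fun h => hE1 h.2) (fun h => hB1 h.1) (fun h => hB2 h.1)
  have hb1sa12 : b1s ≤ a12 := hle _ _ (Or.inr (Or.inl rfl)) (Or.inr (Or.inr (Or.inl rfl)))
    (fun h => hA1 h.1.symm) (fun h => hF1 h.2.symm) (fun h => hB1 h.1) (fun h => hB2 h.1)
  have hb1sa2 : b1s ≤ a2 := hle _ _ (Or.inr (Or.inl rfl)) (Or.inr (Or.inr (Or.inr rfl)))
    (fun h => hA1 h.1.symm) (fun h => hF2 h.2.symm) (fun h => hB1 h.1) (fun h => hB2 h.1)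
  have hb2sa0 : b2s ≤ a0 := hle _ _ (Or.inr (Or.inr (Or.inl rfl))) (Or.inl rfl)
    (fun h => hA2 h.1.symm) (fun h => hB1 h.1.symm) (fun h => hE2 h.2) (fun h => hC1 h.1)
  have hb2sa11 : b2s ≤ a11 := hle _ _ (Or.inr (Or.inr (Or.inl rfl))) (Or.inr (Or.inl rfl))
    (fun h => hA2 h.1.symm) (fun h => hB1 h.1.symm) (fun h => hF1 h.2) (fun h => hC1 h.1)
  -- key pointwise lemma
  have key : ∀ (b a : A), b ≤ a → ∀ (y : S), y ≠ z → ∀ ω, X a ω = y → X b ω = y := by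
    intro b a hba y hy ω hω
    have h := hmono b a hba ω
    rw [hω, hleS] at h
    rcases h with h | h
    · exact h
    · exact absurd h.2 hy
  -- the four events
  set E0 := {ω | X a0 ω = y0} with hE0
  set E1 := {ω | X a11 ω = y1} with hE1def
  set E2 := {ω | X a12 ω = y2} with hE2def
  set Es := {ω | X a2 ω = ys} with hEsdef
  -- pairwise disjointness (pointwise via common lower bounds)
  have disj : ∀ (e f : A) (u v : S), u ≠ z → v ≠ z → u ≠ v →
      ∀ (b : A), b ≤ e → b ≤ f → Disjoint {ω | X e ω = u} {ω | X f ω = v} := by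
    intro e f u v hu hv huv b hbe hbf
    rw [Set.disjoint_left]
    intro ω hωe hωf
    have h1 := key b e hbe u hu ω hωe
    have h2 := key b f hbf v hv ω hωf
    exact huv (h1 ▸ h2 ▸ rfl)
  have d01 : Disjoint E0 E1 := disj a0 a11 y0 y1 (Ne.symm hzy0) (Ne.symm hzy1) h01 b2s hb2sa0 hb2sa11
  have d02 : Disjoint E0 E2 := disj a0 a12 y0 y2 (Ne.symm hzy0) (Ne.symm hzy2) h02 b1s hb1sa0 hb1sa12
  have d0s : Disjoint E0 Es := disj a0 a2 y0 ys (Ne.symm hzy0) (Ne.symm hzys) h0s b1s hb1sa0 hb1sa2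
  have d12 : Disjoint E1 E2 := disj a11 a12 y1 y2 (Ne.symm hzy1) (Ne.symm hzy2) h12 b1 hb1a11 hb1a12
  have d1s : Disjoint E1 Es := disj a11 a2 y1 ys (Ne.symm hzy1) (Ne.symm hzys) h1s b1 hb1a11 hb1a2
  have d2s : Disjoint E2 Es := disj a12 a2 y2 ys (Ne.symm hzy2) (Ne.symm hzys) h2s.1 b1 hb1a12 hb1a2
  -- measures
  have third : (0:ℝ) ≤ 1/3 := by norm_num
  have m0 : μ E0 = ENNReal.ofReal (1/3) := by
    rw [hμ a0 y0, hPa0 y0]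
    simp [pmass, Ne.symm hzy0]
  have m1 : μ E1 = ENNReal.ofReal (1/3) := by
    rw [hμ a11 y1, hPa11 y1]
    simp [pmass, Ne.symm hzy1]
  have m2 : μ E2 = ENNReal.ofReal (1/3) := by
    rw [hμ a12 y2, hPa12 y2]
    simp [pmass, Ne.symm hzy2]
  have ms : μ Es = ENNReal.ofReal (1/3) := by
    rw [hμ a2 ys, hPa2 ys]
    simp [pmass, Ne.symm hzys]
  have meas0 := hmeas a0 y0
  have meas1 := hmeas a11 y1
  have meas2 := hmeas a12 y2
  have meass := hmeas a2 ys
  have hunion : μ (E0 ∪ E1 ∪ E2 ∪ Es) = ENNReal.ofReal (1/3) + ENNReal.ofReal (1/3)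
      + ENNReal.ofReal (1/3) + ENNReal.ofReal (1/3) := by
    rw [measure_union (by
        rw [Set.disjoint_union_left, Set.disjoint_union_left]
        exact ⟨⟨d0s, d1s⟩, d2s⟩) meass,
      measure_union (by rw [Set.disjoint_union_left]; exact ⟨d02, d12⟩) meas2,
      measure_union d01 meas1, m0, m1, m2, ms]
  have hle1 : μ (E0 ∪ E1 ∪ E2 ∪ Es) ≤ 1 := prob_le_one
  rw [hunion, ← ENNReal.ofReal_add third third, ← ENNReal.ofReal_add (by norm_num) third,
    ← ENNReal.ofReal_add (by norm_num) third, ← ENNReal.ofReal_one] at hle1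
  have := ENNReal.ofReal_le_ofReal_iff (by norm_num : (0:ℝ) ≤ 1) |>.1 hle1
  norm_num at this
end

section
/- Let A be a finite poset with minimal elements D_A, and suppose there exist a₀ ∈ A, a set C₁ = {a₁⁽¹⁾, …, a₁⁽ⁿ⁾} of n elements incomparable with a₀, a down-set A₂ generated by a set C₂, and partition pieces A₀ = A*(a₀) ∩ ⋂_j A*(a₁⁽ʲ⁾), A₁ = A \ A*(a₀), A_* = A*(a₀) \ ⋂_j A*(a₁⁽ʲ⁾), where A*(α) = {β : β ≤ α}. If every minimal element b_* ≤ some element of C₂ with b_* ≤ a₀ and b_* ≠ b₀ satisfies |A(b_*) ∩ C₁| ≤ n − 1 (where A(b_*) is the principal up-set), and every element of C₂ is incomparable with b₀ ∈ A₀ ∩ D_A, then A₀ ∩ A₂ = ∅. -/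
open scoped Classical

/-- Lemma 4.9: the down-sets `A₀` and `A₂` are disjoint. -/
theorem stmt_18 {A : Type*} [Fintype A] [PartialOrder A]
    (a0 : A) (n : ℕ) (hn : 0 < n)
    (C1 : Finset A) (hC1card : C1.card = n)
    (hC1inc : ∀ c ∈ C1, ¬ c ≤ a0 ∧ ¬ a0 ≤ c)
    (C2 : Set A) (b0 : A) (hb0min : IsMin b0)
    (hb0A0 : b0 ≤ a0 ∧ ∀ c ∈ C1, b0 ≤ c)
    (hC2inc : ∀ c ∈ C2, ¬ c ≤ b0 ∧ ¬ b0 ≤ c)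
    (hbound : ∀ b : A, IsMin b → (∃ c ∈ C2, b ≤ c) → b ≤ a0 → b ≠ b0 →
      (C1.filter (fun c => b ≤ c)).card ≤ n - 1) :
    {β : A | β ≤ a0 ∧ ∀ c ∈ C1, β ≤ c} ∩ {β : A | ∃ c ∈ C2, β ≤ c} = ∅ := by
  ext β
  simp only [Set.mem_inter_iff, Set.mem_setOf_eq, Set.mem_empty_iff_false, iff_false]
  rintro ⟨⟨hβa0, hβC1⟩, c2, hc2, hβc2⟩
  obtain ⟨b, hbβ, hbmin⟩ := exists_minimal_le_of_wellFoundedLT (fun _ : A => True) β trivial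
  have hbmin' : IsMin b := fun x hx => hbmin.2 trivial hx
  have hbne : b ≠ b0 := by
    rintro rfl
    exact (hC2inc c2 hc2).2 (hbβ.trans hβc2)
  have := hbound b hbmin' ⟨c2, hc2, hbβ.trans hβc2⟩ (hbβ.trans hβa0) hbne
  have hfull : C1.filter (fun c => b ≤ c) = C1 :=
    Finset.filter_true_of_mem (fun c hc => hbβ.trans (hβC1 c hc))
  rw [hfull, hC1card] at this
  omega
end
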